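/- arXiv:math/0401287 — 5 statements merged into one kernel-verified Lean document; each statement's English description precedes it below -/
import Mathlib

section
/- Lemma 2.8: Let m ≥ 2, n_1, …, n_r ≥ 1 and n = 2(n_1 + … + n_r) + m. Let M be the set of block-diagonal matrices x = diag(g_1, …, g_r, h, ε(g_r), …, ε(g_1)) ∈ GL_n(E) with g_i ∈ GL_{n_i}(E), h ∈ U(m), and det x = 1. Then M is a subgroup of GL_n(E), and M is isomorphic to the semidirect product of SU(m) by GL_{n_1}(E) × … × GL_{n_r}(E), where g = (g_1, …, g_r) acts on SU(m) by h_0 ↦ α_m(d)^{-1} · h_0 · α_m(d) with d = ∏_{i=1}^r det g_i. Explicitly, the map sending the pair (h_0, g) to diag(g_1, …, g_r, h_0 · α_m(d)^{-1}, ε(g_r), …, ε(g_1)) is a group isomorphism from this semidirect product onto M. -/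
/-!
Lemma 2.8.

Setting: `E` is a field with an automorphism `γ` of order two (the nontrivial element of
`Gal(E/F)`, `F` the fixed field of `γ`); `ε(g) = u_k · ᵗγ(g)⁻¹ · u_k⁻¹`;
`α_m(a) = diag(a, I_{m-2}, γ(a)⁻¹)` for `m ≥ 2`; `U(m)` is the quasi-split unitary group
and `SU(m) = U(m) ∩ SL_m(E)`.

STATEMENT: for `m ≥ 2`, the set `M` of block-diagonal matrices
`diag(g₁, …, g_r, h, ε(g_r), …, ε(g₁))` with `gᵢ ∈ GL_{nᵢ}(E)`, `h ∈ U(m)`, `det = 1`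
is a subgroup of `GL_n(E)` (`n = 2(n₁ + ⋯ + n_r) + m`), isomorphic to the semidirect
product of `SU(m)` by `GL_{n₁}(E) × ⋯ × GL_{n_r}(E)`, where `g` acts on `SU(m)` by
`h₀ ↦ α_m(d)⁻¹ h₀ α_m(d)`, `d = ∏ det gᵢ`, via
`(h₀, g) ↦ diag(g₁, …, g_r, h₀ · α_m(d)⁻¹, ε(g_r), …, ε(g₁))`.
-/

open Matrix
noncomputable section

variable {E : Type*} [Field E]

/-- The antidiagonal matrix `u_m`, with `(u_m)_{i j} = (-1)^j` when `i + j = m + 1`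
(in 1-indexed coordinates) and `0` otherwise. -/
def uMat (E : Type*) [Field E] (m : ℕ) : Matrix (Fin m) (Fin m) E :=
  Matrix.of fun i j => if (i : ℕ) + (j : ℕ) = m - 1 then (-1 : E) ^ ((j : ℕ) + 1) else 0

/-- `ε(g) = u_k · ᵗγ(g)⁻¹ · u_k⁻¹`, where `γ` is applied entrywise. -/
def eps (γ : E ≃+* E) {k : ℕ} (g : Matrix (Fin k) (Fin k) E) : Matrix (Fin k) (Fin k) E :=
  uMat E k * ((g.map γ)ᵀ)⁻¹ * (uMat E k)⁻¹

/-- Membership in the quasi-split unitary group `U(m)`: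
`h` is invertible and `h · u_m · ᵗγ(h) = u_m`. -/
def InU (γ : E ≃+* E) {m : ℕ} (h : Matrix (Fin m) (Fin m) E) : Prop :=
  IsUnit h.det ∧ h * uMat E m * (h.map γ)ᵀ = uMat E m

/-- `α_m(a) = diag(a, I_{m-2}, γ(a)⁻¹)`. -/
def alphaMat (γ : E ≃+* E) (m : ℕ) (a : E) : Matrix (Fin m) (Fin m) E :=
  Matrix.diagonal fun i => if (i : ℕ) = 0 then a else if (i : ℕ) = m - 1 then (γ a)⁻¹ else 1

/-- Index type realizing a square matrix of size `n₁ + ⋯ + n_r + m + n_r + ⋯ + n₁`. -/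
abbrev LeviIdx {r : ℕ} (n : Fin r → ℕ) (m : ℕ) : Type :=
  ((Σ i : Fin r, Fin (n i)) ⊕ Fin m) ⊕ (Σ i : Fin r, Fin (n i.rev))

/-- The block-diagonal matrix `diag(g₁, …, g_r, h, ε(g_r), …, ε(g₁))`. -/
def leviMat (γ : E ≃+* E) {r : ℕ} (n : Fin r → ℕ) {m : ℕ}
    (g : ∀ i : Fin r, Matrix (Fin (n i)) (Fin (n i)) E) (h : Matrix (Fin m) (Fin m) E) :
    Matrix (LeviIdx n m) (LeviIdx n m) E :=
  Matrix.fromBlocks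
    (Matrix.fromBlocks (Matrix.blockDiagonal' g) 0 0 h) 0 0
    (Matrix.blockDiagonal' fun i : Fin r => eps γ (g i.rev))

/-- The set `M` of Lemma 2.8: block-diagonal matrices
`diag(g₁, …, g_r, h, ε(g_r), …, ε(g₁))` with `gᵢ ∈ GL_{nᵢ}(E)`, `h ∈ U(m)` and
determinant `1`. -/
def leviSetU (γ : E ≃+* E) {r : ℕ} (n : Fin r → ℕ) (m : ℕ) :
    Set (Matrix (LeviIdx n m) (LeviIdx n m) E) :=
  {x | ∃ (g : ∀ i : Fin r, Matrix (Fin (n i)) (Fin (n i)) E)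
        (h : Matrix (Fin m) (Fin m) E),
    (∀ i, IsUnit (g i).det) ∧ InU γ h ∧ x = leviMat γ n g h ∧ x.det = 1}

section Aux

variable (γ : E ≃+* E)

lemma uMat_eq (m : ℕ) :
    uMat E m = (Matrix.diagonal fun j : Fin m => (-1 : E) ^ ((j : ℕ) + 1)).submatrix
      (Fin.revPerm : Equiv.Perm (Fin m)) id := by
  ext i j
  simp only [uMat, of_apply, submatrix_apply, Fin.revPerm_apply, id_eq, diagonal_apply]
  by_cases h : (i : ℕ) + (j : ℕ) = m - 1
  · have hij : i.rev = j := by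
      have := i.isLt; have := j.isLt
      ext; simp only [Fin.val_rev]; omega
    simp [h, hij]
  · have hij : i.rev ≠ j := by
      intro e
      have := i.isLt; have := j.isLt
      apply h
      have : ((i.rev : Fin m) : ℕ) = j := by rw [e]
      simp only [Fin.val_rev] at this; omega
    simp [h, hij]

lemma isUnit_uMat_det (m : ℕ) : IsUnit (uMat E m).det := by
  rw [uMat_eq, Matrix.det_permute, Matrix.det_diagonal]
  rw [isUnit_iff_ne_zero]
  apply mul_ne_zero
  · rcases Int.units_eq_one_or (Equiv.Perm.sign (Fin.revPerm : Equiv.Perm (Fin m))) with h | h <;>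
      simp [h]
  · rw [Finset.prod_ne_zero_iff]
    exact fun j _ => pow_ne_zero _ (neg_ne_zero.mpr one_ne_zero)

lemma eps_one {k : ℕ} : eps γ (1 : Matrix (Fin k) (Fin k) E) = 1 := by
  unfold eps
  rw [Matrix.map_one (⇑γ) (map_zero γ) (map_one γ), transpose_one, inv_one, Matrix.mul_one]
  exact Matrix.mul_nonsing_inv _ (isUnit_uMat_det k)

lemma eps_mul {k : ℕ} (g g' : Matrix (Fin k) (Fin k) E) :
    eps γ (g * g') = eps γ g * eps γ g' := by
  unfold eps
  have hmap : (g * g').map γ = g.map γ * g'.map γ := by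
    ext i j; simp [Matrix.mul_apply, map_sum, _root_.map_mul]
  have hu : (uMat E k)⁻¹ * uMat E k = 1 := Matrix.nonsing_inv_mul _ (isUnit_uMat_det k)
  rw [hmap, transpose_mul, Matrix.mul_inv_rev]
  calc uMat E k * (((g.map γ)ᵀ)⁻¹ * ((g'.map γ)ᵀ)⁻¹) * (uMat E k)⁻¹
      = uMat E k * ((g.map γ)ᵀ)⁻¹ * ((uMat E k)⁻¹ * uMat E k) * ((g'.map γ)ᵀ)⁻¹ *
          (uMat E k)⁻¹ := by rw [hu]; noncomm_ring
    _ = _ := by noncomm_ring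

lemma map_eq_map_ringHom {k : ℕ} (g : Matrix (Fin k) (Fin k) E) :
    g.map γ = g.map γ.toRingHom := rfl

lemma det_map_gamma {k : ℕ} (g : Matrix (Fin k) (Fin k) E) :
    (g.map γ).det = γ g.det := (RingHom.map_det γ.toRingHom g).symm

lemma det_eps {k : ℕ} (g : Matrix (Fin k) (Fin k) E) :
    (eps γ g).det = (γ g.det)⁻¹ := by
  unfold eps
  rw [det_mul, det_mul, Matrix.det_nonsing_inv, Matrix.det_nonsing_inv, det_transpose,
    det_map_gamma, Ring.inverse_eq_inv']
  have h : (uMat E k).det ≠ 0 := (isUnit_uMat_det k).ne_zero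
  rw [mul_comm ((uMat E k).det), mul_assoc, mul_inv_cancel₀ h, mul_one]

end Aux
section Aux2

variable (γ : E ≃+* E)

lemma map_gamma_mul {k : ℕ} (a b : Matrix (Fin k) (Fin k) E) :
    (a * b).map γ = a.map γ * b.map γ := by
  ext i j; simp [Matrix.mul_apply, map_sum, _root_.map_mul]

lemma map_gamma_one {k : ℕ} : (1 : Matrix (Fin k) (Fin k) E).map γ = 1 :=
  Matrix.map_one (⇑γ) (map_zero γ) (map_one γ)

lemma map_gamma_inv {k : ℕ} (a : Matrix (Fin k) (Fin k) E) (ha : IsUnit a.det) :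
    a⁻¹.map γ = (a.map γ)⁻¹ := by
  symm
  apply Matrix.inv_eq_right_inv
  rw [← map_gamma_mul, Matrix.mul_nonsing_inv _ ha, map_gamma_one]

lemma InU.one {m : ℕ} : InU γ (1 : Matrix (Fin m) (Fin m) E) := by
  refine ⟨by simp, ?_⟩
  rw [map_gamma_one, transpose_one, Matrix.mul_one, Matrix.one_mul]

lemma InU.mul {m : ℕ} {a b : Matrix (Fin m) (Fin m) E} (ha : InU γ a) (hb : InU γ b) :
    InU γ (a * b) := by
  refine ⟨by rw [det_mul]; exact ha.1.mul hb.1, ?_⟩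
  rw [map_gamma_mul, transpose_mul]
  calc a * b * uMat E m * ((b.map γ)ᵀ * (a.map γ)ᵀ)
      = a * (b * uMat E m * (b.map γ)ᵀ) * (a.map γ)ᵀ := by noncomm_ring
    _ = uMat E m := by rw [hb.2, ha.2]

lemma InU.inv {m : ℕ} {a : Matrix (Fin m) (Fin m) E} (ha : InU γ a) : InU γ a⁻¹ := by
  have hdet : IsUnit a⁻¹.det := by
    rw [Matrix.det_nonsing_inv, Ring.inverse_eq_inv']
    exact ha.1.inv
  refine ⟨hdet, ?_⟩
  have hγdet : IsUnit (a.map γ).det := by rw [det_map_gamma]; exact ha.1.map γ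
  have hT : IsUnit ((a.map γ)ᵀ).det := by rwa [det_transpose]
  rw [map_gamma_inv γ a ha.1, Matrix.transpose_nonsing_inv]
  calc a⁻¹ * uMat E m * ((a.map γ)ᵀ)⁻¹
      = a⁻¹ * (a * uMat E m * (a.map γ)ᵀ) * ((a.map γ)ᵀ)⁻¹ := by rw [ha.2]
    _ = (a⁻¹ * a) * uMat E m * ((a.map γ)ᵀ * ((a.map γ)ᵀ)⁻¹) := by noncomm_ring
    _ = uMat E m := by
        rw [Matrix.nonsing_inv_mul _ ha.1, Matrix.mul_nonsing_inv _ hT, Matrix.one_mul,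
          Matrix.mul_one]

lemma alphaMat_one (m : ℕ) : alphaMat γ m 1 = 1 := by
  have h : (fun i : Fin m => if (i : ℕ) = 0 then (1 : E) else if (i : ℕ) = m - 1 then (γ 1)⁻¹
      else 1) = fun _ => 1 := by
    funext i; split <;> simp
  unfold alphaMat
  rw [h, Matrix.diagonal_one]

lemma alphaMat_mul (m : ℕ) (a b : E) :
    alphaMat γ m (a * b) = alphaMat γ m a * alphaMat γ m b := by
  have h : ∀ i : Fin m, (if (i : ℕ) = 0 then a * b else if (i : ℕ) = m - 1 then (γ (a * b))⁻¹
      else 1) =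
      (if (i : ℕ) = 0 then a else if (i : ℕ) = m - 1 then (γ a)⁻¹ else 1) *
      (if (i : ℕ) = 0 then b else if (i : ℕ) = m - 1 then (γ b)⁻¹ else 1) := by
    intro i
    by_cases h1 : (i : ℕ) = 0 <;> by_cases h2 : (i : ℕ) = m - 1 <;>
      simp_all [_root_.map_mul, mul_inv, mul_comm]
  unfold alphaMat
  rw [Matrix.diagonal_mul_diagonal]
  exact congrArg Matrix.diagonal (funext h)

lemma alphaMat_inv (m : ℕ) {a : E} (ha : a ≠ 0) :
    (alphaMat γ m a)⁻¹ = alphaMat γ m a⁻¹ := by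
  apply Matrix.inv_eq_right_inv
  rw [← alphaMat_mul, mul_inv_cancel₀ ha, alphaMat_one]

lemma det_alphaMat (m : ℕ) (hm : 2 ≤ m) (a : E) :
    (alphaMat γ m a).det = a * (γ a)⁻¹ := by
  unfold alphaMat
  rw [Matrix.det_diagonal]
  set i0 : Fin m := ⟨0, by omega⟩ with hi0
  set i1 : Fin m := ⟨m - 1, by omega⟩ with hi1
  have h0 : i0 ∈ Finset.univ := Finset.mem_univ _
  have hlast : i1 ∈ Finset.univ := Finset.mem_univ _
  have hne : i1 ≠ i0 := by
    intro h
    have : m - 1 = 0 := congrArg Fin.val h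
    omega
  rw [show (Finset.univ : Finset (Fin m)) = insert i0 (Finset.univ.erase i0) by
    rw [Finset.insert_erase h0]]
  rw [Finset.prod_insert (Finset.notMem_erase _ _)]
  rw [show ((i0 : Fin m) : ℕ) = 0 from rfl, if_pos rfl]
  congr 1
  rw [show Finset.univ.erase i0 =
      insert i1 ((Finset.univ.erase i0).erase i1) by
    rw [Finset.insert_erase (Finset.mem_erase.mpr ⟨hne, hlast⟩)]]
  rw [Finset.prod_insert (Finset.notMem_erase _ _)]
  have hv : ((i1 : Fin m) : ℕ) ≠ 0 := by simp [hi1]; omega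
  rw [show ((i1 : Fin m) : ℕ) = m - 1 from rfl] at hv ⊢
  rw [if_neg (by omega : ¬ (m - 1 = 0)), if_pos rfl]
  rw [Finset.prod_eq_one, mul_one]
  intro i hi
  simp only [Finset.mem_erase] at hi
  rw [if_neg, if_neg]
  · intro h; exact hi.1 (by ext; simpa using h)
  · intro h; exact hi.2.1 (by ext; simpa using h)

lemma InU.alpha (m : ℕ) (hm : 2 ≤ m) (hγ2 : ∀ x, γ (γ x) = x) {a : E} (ha : a ≠ 0) :
    InU γ (alphaMat γ m a) := by
  constructor
  · rw [det_alphaMat γ m hm a, isUnit_iff_ne_zero]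
    have : γ a ≠ 0 := fun h => ha (by simpa [hγ2] using congrArg γ h)
    exact mul_ne_zero ha (inv_ne_zero this)
  · have hmap : (alphaMat γ m a).map γ =
        Matrix.diagonal fun i : Fin m =>
          if (i : ℕ) = 0 then γ a else if (i : ℕ) = m - 1 then a⁻¹ else 1 := by
      have h : ∀ i : Fin m, γ (if (i : ℕ) = 0 then a else if (i : ℕ) = m - 1 then (γ a)⁻¹
          else 1) = if (i : ℕ) = 0 then γ a else if (i : ℕ) = m - 1 then a⁻¹ else 1 := by
        intro i
        by_cases h1 : (i : ℕ) = 0 <;> by_cases h2 : (i : ℕ) = m - 1 <;>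
          simp_all [map_inv₀, hγ2]
      unfold alphaMat
      rw [Matrix.diagonal_map (map_zero γ)]
      exact congrArg Matrix.diagonal (funext h)
    rw [hmap, Matrix.diagonal_transpose]
    unfold alphaMat
    ext i j
    rw [Matrix.mul_diagonal, Matrix.diagonal_mul]
    rcases eq_or_ne ((i : ℕ) + (j : ℕ)) (m - 1) with h | h
    · have hi := i.isLt; have hj := j.isLt
      rcases eq_or_ne (i : ℕ) 0 with h0 | h0
      · have hj' : (j : ℕ) = m - 1 := by omega
        have hj0 : (j : ℕ) ≠ 0 := by omega
        rw [if_pos h0, if_neg hj0, if_pos hj']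
        have : γ a ≠ 0 := fun hc => ha (by simpa [hγ2] using congrArg γ hc)
        field_simp
      · rcases eq_or_ne (i : ℕ) (m - 1) with h1 | h1
        · have hj' : (j : ℕ) = 0 := by omega
          rw [if_neg h0, if_pos h1, if_pos hj']
          have : γ a ≠ 0 := fun hc => ha (by simpa [hγ2] using congrArg γ hc)
          field_simp
        · have hj0 : (j : ℕ) ≠ 0 := by omega
          have hj1 : (j : ℕ) ≠ m - 1 := by omega
          rw [if_neg h0, if_neg h1, if_neg hj0, if_neg hj1, one_mul, mul_one]
    · have : uMat E m i j = 0 := by simp [uMat, h]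
      rw [this, mul_zero, zero_mul]

end Aux2
section Aux3

/-- Equiv splitting off the first block of a `Fin (r+1)`-indexed sigma type. -/
def sigmaFinSuccEquiv {r : ℕ} (n : Fin (r + 1) → ℕ) :
    (Σ i : Fin (r + 1), Fin (n i)) ≃ (Fin (n 0) ⊕ Σ i : Fin r, Fin (n i.succ)) where
  toFun x := Fin.cases (motive := fun i => Fin (n i) → (Fin (n 0) ⊕ Σ i : Fin r, Fin (n i.succ)))
    (fun a => Sum.inl a) (fun j a => Sum.inr ⟨j, a⟩) x.1 x.2
  invFun x := Sum.elim (fun a => ⟨0, a⟩) (fun y => ⟨y.1.succ, y.2⟩) x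
  left_inv := by
    rintro ⟨i, a⟩
    induction i using Fin.cases <;> simp
  right_inv := by
    rintro (a | ⟨j, a⟩) <;> simp

lemma blockDiagonal'_reindex {r : ℕ} (n : Fin (r + 1) → ℕ)
    (M : ∀ i : Fin (r + 1), Matrix (Fin (n i)) (Fin (n i)) E) :
    (Matrix.blockDiagonal' M).submatrix (sigmaFinSuccEquiv n).symm (sigmaFinSuccEquiv n).symm =
      Matrix.fromBlocks (M 0) 0 0 (Matrix.blockDiagonal' fun j : Fin r => M j.succ) := by
  ext x y
  rcases x with a | ⟨i, a⟩ <;> rcases y with b | ⟨j, b⟩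
  · simp [sigmaFinSuccEquiv, Matrix.blockDiagonal'_apply_eq]
  · simp [sigmaFinSuccEquiv]
    exact Matrix.blockDiagonal'_apply_ne M _ _ (by simp [Fin.succ_ne_zero, (Fin.succ_ne_zero j).symm])
  · simp [sigmaFinSuccEquiv]
    exact Matrix.blockDiagonal'_apply_ne M _ _ (Fin.succ_ne_zero i)
  · simp only [sigmaFinSuccEquiv, Matrix.submatrix_apply, Equiv.coe_fn_symm_mk, Sum.elim_inr,
      Matrix.fromBlocks_apply₂₂]
    rcases eq_or_ne i j with rfl | hij
    · rw [Matrix.blockDiagonal'_apply_eq, Matrix.blockDiagonal'_apply_eq]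
    · rw [Matrix.blockDiagonal'_apply_ne _ _ _ (fun h => hij (Fin.succ_injective _ h)),
        Matrix.blockDiagonal'_apply_ne _ _ _ hij]

lemma det_blockDiagonal'_fin : ∀ {r : ℕ} (n : Fin r → ℕ)
    (M : ∀ i : Fin r, Matrix (Fin (n i)) (Fin (n i)) E),
    (Matrix.blockDiagonal' M).det = ∏ i, (M i).det := by
  intro r
  induction r with
  | zero => intro n M; simp [Matrix.det_isEmpty]
  | succ r ih =>
    intro n M
    have h := congrArg Matrix.det (blockDiagonal'_reindex n M)
    rw [Matrix.det_submatrix_equiv_self] at h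
    rw [h, Matrix.det_fromBlocks_zero₂₁, ih, Fin.prod_univ_succ]
end Aux3
section Aux4

variable (γ : E ≃+* E) {r : ℕ} (n : Fin r → ℕ) {m : ℕ}

lemma leviMat_mul (g g' : ∀ i : Fin r, Matrix (Fin (n i)) (Fin (n i)) E)
    (h h' : Matrix (Fin m) (Fin m) E) :
    leviMat γ n g h * leviMat γ n g' h' = leviMat γ n (fun i => g i * g' i) (h * h') := by
  unfold leviMat
  rw [Matrix.fromBlocks_multiply, Matrix.fromBlocks_multiply]
  simp only [Matrix.mul_zero, Matrix.zero_mul, add_zero, zero_add]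
  rw [← Matrix.blockDiagonal'_mul, ← Matrix.blockDiagonal'_mul]
  have he : (fun k : Fin r => eps γ (g k.rev) * eps γ (g' k.rev)) =
      fun k => eps γ (g k.rev * g' k.rev) := funext fun k => (eps_mul γ _ _).symm
  rw [he]

lemma leviMat_one :
    leviMat γ n (fun _ => 1) (1 : Matrix (Fin m) (Fin m) E) = 1 := by
  unfold leviMat
  have h1 : (Matrix.blockDiagonal' fun i : Fin r =>
      (1 : Matrix (Fin (n i)) (Fin (n i)) E)) = 1 := Matrix.blockDiagonal'_one
  have h2 : (Matrix.blockDiagonal' fun i : Fin r =>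
      eps γ (1 : Matrix (Fin (n i.rev)) (Fin (n i.rev)) E)) = 1 := by
    rw [show (fun i : Fin r => eps γ (1 : Matrix (Fin (n i.rev)) (Fin (n i.rev)) E)) =
      fun i => 1 from funext fun i => eps_one γ]
    exact Matrix.blockDiagonal'_one
  rw [h1, h2, Matrix.fromBlocks_one, Matrix.fromBlocks_one]

lemma leviMat_det (g : ∀ i : Fin r, Matrix (Fin (n i)) (Fin (n i)) E)
    (h : Matrix (Fin m) (Fin m) E) :
    (leviMat γ n g h).det = (∏ i, (g i).det) * h.det * (γ (∏ i, (g i).det))⁻¹ := by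
  unfold leviMat
  rw [Matrix.det_fromBlocks_zero₂₁, Matrix.det_fromBlocks_zero₂₁, det_blockDiagonal'_fin,
    det_blockDiagonal'_fin]
  have h1 : (∏ i : Fin r, (eps γ (g i.rev)).det) = (γ (∏ i, (g i).det))⁻¹ := by
    calc (∏ i : Fin r, (eps γ (g i.rev)).det)
        = ∏ i : Fin r, (γ ((g i.rev).det))⁻¹ := by
          exact Finset.prod_congr rfl fun i _ => det_eps γ _
      _ = ∏ i : Fin r, (γ ((g i).det))⁻¹ :=
          Equiv.prod_comp (Fin.revPerm : Equiv.Perm (Fin r)) fun i => (γ ((g i).det))⁻¹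
      _ = (γ (∏ i, (g i).det))⁻¹ := by
          rw [map_prod, Finset.prod_inv_distrib]
  rw [h1]

lemma leviMat_inj {g g' : ∀ i : Fin r, Matrix (Fin (n i)) (Fin (n i)) E}
    {h h' : Matrix (Fin m) (Fin m) E} (H : leviMat γ n g h = leviMat γ n g' h') :
    g = g' ∧ h = h' := by
  unfold leviMat at H
  have H11 := congrArg Matrix.toBlocks₁₁ H
  rw [Matrix.toBlocks_fromBlocks₁₁, Matrix.toBlocks_fromBlocks₁₁] at H11
  constructor
  · have := congrArg Matrix.toBlocks₁₁ H11
    rw [Matrix.toBlocks_fromBlocks₁₁, Matrix.toBlocks_fromBlocks₁₁] at this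
    exact Matrix.blockDiagonal'_injective this
  · have := congrArg Matrix.toBlocks₂₂ H11
    rwa [Matrix.toBlocks_fromBlocks₂₂, Matrix.toBlocks_fromBlocks₂₂] at this

end Aux4
section Aux5

variable (γ : E ≃+* E)

/-- `SU(m)` as a subgroup of `GL m E`. -/
def SUgrp (m : ℕ) : Subgroup (GL (Fin m) E) where
  carrier := {h | InU γ (h : Matrix (Fin m) (Fin m) E) ∧
    (h : Matrix (Fin m) (Fin m) E).det = 1}
  one_mem' := ⟨InU.one γ, by simp⟩
  mul_mem' := by
    rintro a b ⟨ha1, ha2⟩ ⟨hb1, hb2⟩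
    exact ⟨by rw [Units.val_mul]; exact InU.mul γ ha1 hb1,
      by rw [Units.val_mul, det_mul, ha2, hb2, one_mul]⟩
  inv_mem' := by
    rintro a ⟨ha1, ha2⟩
    constructor
    · rw [Matrix.coe_units_inv]; exact InU.inv γ ha1
    · rw [Matrix.coe_units_inv, Matrix.det_nonsing_inv, Ring.inverse_eq_inv', ha2, inv_one]

lemma mem_SUgrp_iff {m : ℕ} (h : GL (Fin m) E) :
    h ∈ SUgrp γ m ↔ InU γ (h : Matrix (Fin m) (Fin m) E) ∧
      (h : Matrix (Fin m) (Fin m) E).det = 1 := Iff.rfl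

/-- `α_m(d)` as an element of `GL m E`, for a unit `d`. -/
def uAlpha (m : ℕ) (d : Eˣ) : GL (Fin m) E where
  val := alphaMat γ m d
  inv := alphaMat γ m ((d⁻¹ : Eˣ) : E)
  val_inv := by
    rw [← alphaMat_mul, Units.val_inv_eq_inv_val, mul_inv_cancel₀ d.ne_zero, alphaMat_one]
  inv_val := by
    rw [← alphaMat_mul, Units.val_inv_eq_inv_val, inv_mul_cancel₀ d.ne_zero, alphaMat_one]

lemma uAlpha_mul (m : ℕ) (d e : Eˣ) :
    uAlpha γ m (d * e) = uAlpha γ m d * uAlpha γ m e :=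
  Units.ext (by rw [Units.val_mul]; exact alphaMat_mul γ m d e)

lemma uAlpha_one (m : ℕ) : uAlpha γ m 1 = 1 :=
  Units.ext (by rw [Units.val_one]; exact alphaMat_one γ m)

lemma uAlpha_inv (m : ℕ) (d : Eˣ) : (uAlpha γ m d)⁻¹ = uAlpha γ m d⁻¹ :=
  Units.ext rfl

lemma coe_uAlpha_inv (m : ℕ) (d : Eˣ) :
    (((uAlpha γ m d)⁻¹ : GL (Fin m) E) : Matrix (Fin m) (Fin m) E) =
      (alphaMat γ m (d : E))⁻¹ := by
  rw [Matrix.coe_units_inv]; rfl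

lemma isUnit_det_GL {k : ℕ} (u : GL (Fin k) E) :
    IsUnit ((u : Matrix (Fin k) (Fin k) E)).det :=
  ⟨Matrix.GeneralLinearGroup.det u, rfl⟩

lemma conj_mem_SUgrp {m : ℕ} (u : GL (Fin m) E)
    (hu : InU γ (u : Matrix (Fin m) (Fin m) E)) {h : GL (Fin m) E} (hh : h ∈ SUgrp γ m) :
    u⁻¹ * h * u ∈ SUgrp γ m := by
  rcases hh with ⟨h1, h2⟩
  constructor
  · rw [Units.val_mul, Units.val_mul, Matrix.coe_units_inv]
    exact InU.mul γ (InU.mul γ (InU.inv γ hu) h1) hu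
  · rw [Units.val_mul, Units.val_mul, Matrix.coe_units_inv, det_mul, det_mul,
      Matrix.det_nonsing_inv, Ring.inverse_eq_inv', h2, mul_one]
    exact inv_mul_cancel₀ (isUnit_det_GL u).ne_zero

lemma InU_uAlpha (hγ2 : ∀ x, γ (γ x) = x) {m : ℕ} (hm : 2 ≤ m) (d : Eˣ) : InU γ ((uAlpha γ m d : GL (Fin m) E) : Matrix (Fin m) (Fin m) E) :=
  InU.alpha γ m hm hγ2 d.ne_zero

variable (hγ2 : ∀ x, γ (γ x) = x) {m : ℕ} (hm : 2 ≤ m)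

/-- Conjugation by `α_m(d)⁻¹` (i.e. `h ↦ α_m(d)⁻¹ h α_m(d)`) as an automorphism of `SU(m)`. -/
def sconj (d : Eˣ) : (SUgrp γ m) ≃* (SUgrp γ m) where
  toFun h := ⟨(uAlpha γ m d)⁻¹ * ↑h * uAlpha γ m d,
    conj_mem_SUgrp γ _ (InU_uAlpha γ hγ2 hm d) h.prop⟩
  invFun h := ⟨uAlpha γ m d * ↑h * (uAlpha γ m d)⁻¹, by
    have := conj_mem_SUgrp γ ((uAlpha γ m d)⁻¹) (by
      rw [Matrix.coe_units_inv]; exact InU.inv γ (InU_uAlpha γ hγ2 hm d)) h.prop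
    simpa using this⟩
  left_inv h := by
    ext : 1
    simp [mul_assoc]
  right_inv h := by
    ext : 1
    simp [mul_assoc]
  map_mul' a b := by
    ext : 1
    push_cast
    group

lemma sconj_mul (d e : Eˣ) :
    sconj γ hγ2 hm (d * e) = (sconj γ hγ2 hm d).trans (sconj γ hγ2 hm e) := by
  ext h : 2
  show (_ : GL (Fin m) E) = _
  simp only [sconj, MulEquiv.coe_mk, Equiv.coe_fn_mk, MulEquiv.trans_apply]
  show (uAlpha γ m (d * e))⁻¹ * ↑h * uAlpha γ m (d * e) =
    (uAlpha γ m e)⁻¹ * ((uAlpha γ m d)⁻¹ * ↑h * uAlpha γ m d) * uAlpha γ m e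
  have hc : Commute (uAlpha γ m d) (uAlpha γ m e) := by
    show _ * _ = _ * _
    rw [← uAlpha_mul, ← uAlpha_mul, mul_comm]
  rw [mul_comm d e, uAlpha_mul, _root_.mul_inv_rev, hc.inv_inv.eq, hc.symm.eq]
  group

lemma sconj_one : sconj γ hγ2 hm 1 = MulEquiv.refl _ := by
  ext h : 2
  show (_ : GL (Fin m) E) = _
  show (uAlpha γ m 1)⁻¹ * ↑h * uAlpha γ m 1 = ↑h
  rw [uAlpha_one]
  group

end Aux5
section Aux6

variable (γ : E ≃+* E) (hγ2 : ∀ x, γ (γ x) = x) {m : ℕ} (hm : 2 ≤ m) {r : ℕ} (n : Fin r → ℕ)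

/-- The product of the determinants, as a monoid hom to `Eˣ`. -/
def dHom : (∀ i : Fin r, GL (Fin (n i)) E) →* Eˣ where
  toFun g := ∏ i, Matrix.GeneralLinearGroup.det (g i)
  map_one' := by simp
  map_mul' g g' := by
    simp only [Pi.mul_apply, _root_.map_mul]
    exact Finset.prod_mul_distrib

lemma dHom_val (g : ∀ i : Fin r, GL (Fin (n i)) E) :
    ((dHom n g : Eˣ) : E) = ∏ i, ((g i : Matrix (Fin (n i)) (Fin (n i)) E)).det := by
  show ((Units.coeHom E) (∏ i, Matrix.GeneralLinearGroup.det (g i))) = _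
  rw [map_prod]
  rfl

/-- The action of `∏ GL_{nᵢ}` on `SU(m)` by conjugation by `α_m(∏ det gᵢ)`. -/
def actHom : (∀ i : Fin r, GL (Fin (n i)) E) →* MulAut (SUgrp γ m) where
  toFun g := sconj γ hγ2 hm (dHom n g)
  map_one' := by
    show sconj γ hγ2 hm (dHom n 1) = 1
    rw [(dHom n).map_one]
    ext h : 2
    rw [sconj_one]
    rfl
  map_mul' g g' := by
    show sconj γ hγ2 hm (dHom n (g * g')) = _
    rw [(dHom n).map_mul, mul_comm, sconj_mul]
    ext h : 2
    rfl

/-- `diag(g₁, …, g_r, h, ε(g_r), …, ε(g₁))` as an element of `GL`. -/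
def leviGL (g : ∀ i : Fin r, GL (Fin (n i)) E) (h : GL (Fin m) E) : GL (LeviIdx n m) E where
  val := leviMat γ n (fun i => (g i : Matrix (Fin (n i)) (Fin (n i)) E))
    (h : Matrix (Fin m) (Fin m) E)
  inv := leviMat γ n (fun i => (((g i)⁻¹ : GL (Fin (n i)) E) : Matrix (Fin (n i)) (Fin (n i)) E))
    ((h⁻¹ : GL (Fin m) E) : Matrix (Fin m) (Fin m) E)
  val_inv := by
    rw [leviMat_mul]
    have h1 : (fun i => ((g i : Matrix (Fin (n i)) (Fin (n i)) E)) *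
        (((g i)⁻¹ : GL (Fin (n i)) E) : Matrix (Fin (n i)) (Fin (n i)) E)) =
        fun i => (1 : Matrix (Fin (n i)) (Fin (n i)) E) := by
      funext i
      rw [← Units.val_mul, mul_inv_cancel, Units.val_one]
    rw [h1, ← Units.val_mul, mul_inv_cancel, Units.val_one]
    exact leviMat_one γ n
  inv_val := by
    rw [leviMat_mul]
    have h1 : (fun i => (((g i)⁻¹ : GL (Fin (n i)) E) : Matrix (Fin (n i)) (Fin (n i)) E) *
        (g i : Matrix (Fin (n i)) (Fin (n i)) E)) =
        fun i => (1 : Matrix (Fin (n i)) (Fin (n i)) E) := by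
      funext i
      rw [← Units.val_mul, inv_mul_cancel, Units.val_one]
    rw [h1, ← Units.val_mul, inv_mul_cancel, Units.val_one]
    exact leviMat_one γ n

lemma leviGL_mul (g g' : ∀ i : Fin r, GL (Fin (n i)) E) (h h' : GL (Fin m) E) :
    leviGL γ n g h * leviGL γ n g' h' = leviGL γ n (g * g') (h * h') := by
  apply Units.ext
  show leviMat γ n _ _ * leviMat γ n _ _ = leviMat γ n _ _
  rw [leviMat_mul]
  congr 1

lemma leviGL_one : leviGL γ n 1 (1 : GL (Fin m) E) = 1 := by
  apply Units.ext
  show leviMat γ n (fun i => (((1 : ∀ i : Fin r, GL (Fin (n i)) E) i :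
      GL (Fin (n i)) E) : Matrix (Fin (n i)) (Fin (n i)) E))
    ((1 : GL (Fin m) E) : Matrix (Fin m) (Fin m) E) = 1
  simp only [Pi.one_apply, Units.val_one]
  exact leviMat_one γ n

/-- The homomorphism `Φ` from the semidirect product to `GL (LeviIdx n m) E`. -/
def PhiHom : ((SUgrp γ m) ⋊[actHom γ hγ2 hm n] (∀ i : Fin r, GL (Fin (n i)) E)) →*
    GL (LeviIdx n m) E where
  toFun p := leviGL γ n p.right
    ((p.left : GL (Fin m) E) * (uAlpha γ m (dHom n p.right))⁻¹)
  map_one' := by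
    show leviGL γ n (1 : (SUgrp γ m) ⋊[actHom γ hγ2 hm n]
        (∀ i : Fin r, GL (Fin (n i)) E)).right
      (((1 : (SUgrp γ m) ⋊[actHom γ hγ2 hm n] (∀ i : Fin r, GL (Fin (n i)) E)).left :
          GL (Fin m) E) *
        (uAlpha γ m (dHom n (1 : (SUgrp γ m) ⋊[actHom γ hγ2 hm n]
          (∀ i : Fin r, GL (Fin (n i)) E)).right))⁻¹) = 1
    have h1 : ((1 : (SUgrp γ m) ⋊[actHom γ hγ2 hm n]
        (∀ i : Fin r, GL (Fin (n i)) E)).right) = 1 := rfl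
    have h2 : (((1 : (SUgrp γ m) ⋊[actHom γ hγ2 hm n]
        (∀ i : Fin r, GL (Fin (n i)) E)).left : GL (Fin m) E)) = 1 := rfl
    rw [h1, h2, (dHom n).map_one, uAlpha_one, inv_one, mul_one]
    exact leviGL_one γ n
  map_mul' p q := by
    show leviGL γ n (p * q).right (((p * q).left : GL (Fin m) E) *
        (uAlpha γ m (dHom n (p * q).right))⁻¹) = _
    have hr : (p * q).right = p.right * q.right := rfl
    have hl : ((p * q).left : GL (Fin m) E) =
        (p.left : GL (Fin m) E) *
          ((uAlpha γ m (dHom n p.right))⁻¹ * (q.left : GL (Fin m) E) *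
            uAlpha γ m (dHom n p.right)) := rfl
    rw [leviGL_mul, hl, hr, (dHom n).map_mul]
    congr 1
    have hc : Commute (uAlpha γ m (dHom n p.right)) (uAlpha γ m (dHom n q.right)) := by
      show _ * _ = _ * _
      rw [← uAlpha_mul, ← uAlpha_mul, mul_comm]
    rw [uAlpha_mul, _root_.mul_inv_rev, ← hc.inv_inv.eq]
    group

end Aux6
section Aux7

variable (γ : E ≃+* E) (hγ2 : ∀ x, γ (γ x) = x) {m : ℕ} (hm : 2 ≤ m) {r : ℕ} (n : Fin r → ℕ)

lemma PhiHom_injective : Function.Injective (PhiHom γ hγ2 hm n) := by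
  intro p q hpq
  have hval : leviMat γ n (fun i => ((p.right i : GL (Fin (n i)) E) :
        Matrix (Fin (n i)) (Fin (n i)) E))
      (((p.left : GL (Fin m) E) * (uAlpha γ m (dHom n p.right))⁻¹ : GL (Fin m) E) :
        Matrix (Fin m) (Fin m) E) =
      leviMat γ n (fun i => ((q.right i : GL (Fin (n i)) E) :
        Matrix (Fin (n i)) (Fin (n i)) E))
      (((q.left : GL (Fin m) E) * (uAlpha γ m (dHom n q.right))⁻¹ : GL (Fin m) E) :
        Matrix (Fin m) (Fin m) E) := congrArg Units.val hpq
  obtain ⟨hg, hh⟩ := leviMat_inj γ n hval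
  have hright : p.right = q.right := by
    funext i
    exact Units.ext (congrFun hg i)
  have hleft : p.left = q.left := by
    have h1 : ((p.left : GL (Fin m) E) * (uAlpha γ m (dHom n p.right))⁻¹ : GL (Fin m) E) =
        (q.left : GL (Fin m) E) * (uAlpha γ m (dHom n q.right))⁻¹ := Units.ext hh
    rw [hright] at h1
    exact Subtype.ext (mul_right_cancel h1)
  exact SemidirectProduct.ext hleft hright

lemma PhiHom_mem_leviSetU
    (p : (SUgrp γ m) ⋊[actHom γ hγ2 hm n] (∀ i : Fin r, GL (Fin (n i)) E)) :
    ((PhiHom γ hγ2 hm n p : GL (LeviIdx n m) E) : Matrix (LeviIdx n m) (LeviIdx n m) E) ∈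
      leviSetU γ n m := by
  have hpl := p.left.prop
  rw [mem_SUgrp_iff] at hpl
  refine ⟨fun i => ((p.right i : GL (Fin (n i)) E) : Matrix (Fin (n i)) (Fin (n i)) E),
    ((p.left : GL (Fin m) E) : Matrix (Fin m) (Fin m) E) *
      (alphaMat γ m ((dHom n p.right : Eˣ) : E))⁻¹,
    fun i => isUnit_det_GL _, ?_, ?_, ?_⟩
  · exact InU.mul γ hpl.1 (InU.inv γ (InU.alpha γ m hm hγ2 (Units.ne_zero _)))
  · show leviMat γ n _
      ((((p.left : GL (Fin m) E) * (uAlpha γ m (dHom n p.right))⁻¹ : GL (Fin m) E)) :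
        Matrix (Fin m) (Fin m) E) = _
    rw [Units.val_mul, Matrix.coe_units_inv]
    rfl
  · show (leviMat γ n _
      ((((p.left : GL (Fin m) E) * (uAlpha γ m (dHom n p.right))⁻¹ : GL (Fin m) E)) :
        Matrix (Fin m) (Fin m) E)).det = 1
    rw [leviMat_det, ← dHom_val n p.right, Units.val_mul, det_mul, hpl.2, one_mul,
      Matrix.coe_units_inv, Matrix.det_nonsing_inv, Ring.inverse_eq_inv',
      show ((uAlpha γ m (dHom n p.right) : GL (Fin m) E) : Matrix (Fin m) (Fin m) E) =
        alphaMat γ m ((dHom n p.right : Eˣ) : E) from rfl,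
      det_alphaMat γ m hm]
    have hD : ((dHom n p.right : Eˣ) : E) ≠ 0 := Units.ne_zero _
    have hγD : γ ((dHom n p.right : Eˣ) : E) ≠ 0 := fun hc => hD (by
      simpa [hγ2] using congrArg γ hc)
    field_simp

lemma leviSetU_mem_range {x : GL (LeviIdx n m) E}
    (hx : (x : Matrix (LeviIdx n m) (LeviIdx n m) E) ∈ leviSetU γ n m) :
    ∃ p, PhiHom γ hγ2 hm n p = x := by
  obtain ⟨g, h, hg, hU, hxe, hdet⟩ := hx
  have hgU : ∀ i, IsUnit (g i) := fun i => (Matrix.isUnit_iff_isUnit_det _).mpr (hg i)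
  set gU : ∀ i : Fin r, GL (Fin (n i)) E := fun i => (hgU i).unit with hgUdef
  have hgUval : ∀ i, ((gU i : GL (Fin (n i)) E) : Matrix (Fin (n i)) (Fin (n i)) E) = g i :=
    fun i => (hgU i).unit_spec
  set d : Eˣ := dHom n gU with hd
  have hDval : (d : E) = ∏ i, (g i).det := by
    rw [hd, dHom_val]
    exact Finset.prod_congr rfl fun i _ => by rw [hgUval]
  have hD : (d : E) ≠ 0 := Units.ne_zero _
  have hγD : γ (d : E) ≠ 0 := fun hc => hD (by simpa [hγ2] using congrArg γ hc)
  rw [hxe, leviMat_det, ← hDval] at hdet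
  have hUalpha := InU.alpha γ m hm hγ2 (a := (d : E)) hD
  have hUnit_h₀ : IsUnit (h * alphaMat γ m (d : E)) := by
    rw [Matrix.isUnit_iff_isUnit_det, det_mul]
    exact hU.1.mul hUalpha.1
  have hmem : hUnit_h₀.unit ∈ SUgrp γ m := by
    rw [mem_SUgrp_iff]
    constructor
    · rw [IsUnit.unit_spec]
      exact InU.mul γ hU hUalpha
    · rw [IsUnit.unit_spec, det_mul, det_alphaMat γ m hm]
      calc h.det * ((d : E) * (γ (d : E))⁻¹) = (d : E) * h.det * (γ (d : E))⁻¹ := by ring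
        _ = 1 := hdet
  refine ⟨⟨⟨hUnit_h₀.unit, hmem⟩, gU⟩, ?_⟩
  apply Units.ext
  show leviMat γ n (fun i => ((gU i : GL (Fin (n i)) E) : Matrix (Fin (n i)) (Fin (n i)) E))
    (((hUnit_h₀.unit * (uAlpha γ m (dHom n gU))⁻¹ : GL (Fin m) E)) :
      Matrix (Fin m) (Fin m) E) = (x : Matrix (LeviIdx n m) (LeviIdx n m) E)
  rw [hxe]
  have hA : (fun i => ((gU i : GL (Fin (n i)) E) : Matrix (Fin (n i)) (Fin (n i)) E)) = g :=
    funext hgUval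
  have hB : (((hUnit_h₀.unit * (uAlpha γ m (dHom n gU))⁻¹ : GL (Fin m) E)) :
      Matrix (Fin m) (Fin m) E) = h := by
    rw [Units.val_mul, Matrix.coe_units_inv, IsUnit.unit_spec,
      show ((uAlpha γ m (dHom n gU) : GL (Fin m) E) : Matrix (Fin m) (Fin m) E) =
        alphaMat γ m (d : E) from rfl,
      Matrix.mul_assoc, Matrix.mul_nonsing_inv _ hUalpha.1, Matrix.mul_one]
  rw [hA, hB]

end Aux7
theorem levi_semidirect_structure (γ : E ≃+* E)
    (hγ2 : ∀ x, γ (γ x) = x) (hγne : γ ≠ RingEquiv.refl E)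
    (m : ℕ) (hm : 2 ≤ m) (r : ℕ) (n : Fin r → ℕ) (hn : ∀ i, 1 ≤ n i) :
    -- `M` is a subgroup of `GL_n(E)`
    ∃ S : Subgroup (GL (LeviIdx n m) E),
      (∀ x : GL (LeviIdx n m) E,
        x ∈ S ↔ (x : Matrix (LeviIdx n m) (LeviIdx n m) E) ∈ leviSetU γ n m) ∧
      -- `SU(m)` as a subgroup of `GL_m(E)`
      ∃ SU : Subgroup (GL (Fin m) E),
        (∀ h : GL (Fin m) E, h ∈ SU ↔
          (InU γ (h : Matrix (Fin m) (Fin m) E) ∧ (h : Matrix (Fin m) (Fin m) E).det = 1)) ∧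
        -- the action of `GL_{n₁}(E) × ⋯ × GL_{n_r}(E)` on `SU(m)`:
        -- `h₀ ↦ α_m(d)⁻¹ h₀ α_m(d)` with `d = ∏ det gᵢ`
        ∃ act : (∀ i : Fin r, GL (Fin (n i)) E) →* MulAut SU,
          (∀ (g : ∀ i : Fin r, GL (Fin (n i)) E) (h₀ : SU),
            ((((act g) h₀ : SU) : GL (Fin m) E) : Matrix (Fin m) (Fin m) E) =
              (alphaMat γ m (∏ i, ((g i : Matrix (Fin (n i)) (Fin (n i)) E).det)))⁻¹ *
                ((h₀ : GL (Fin m) E) : Matrix (Fin m) (Fin m) E) *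
                alphaMat γ m (∏ i, ((g i : Matrix (Fin (n i)) (Fin (n i)) E).det))) ∧
          -- the explicit isomorphism `(h₀, g) ↦ diag(g, h₀ · α_m(d)⁻¹, ε(g))`
          ∃ φ : (SU ⋊[act] (∀ i : Fin r, GL (Fin (n i)) E)) ≃* S,
            ∀ p : SU ⋊[act] (∀ i : Fin r, GL (Fin (n i)) E),
              (((φ p : S) : GL (LeviIdx n m) E) : Matrix (LeviIdx n m) (LeviIdx n m) E) =
                leviMat γ n (fun i => (p.right i : Matrix (Fin (n i)) (Fin (n i)) E))
                  (((p.left : GL (Fin m) E) : Matrix (Fin m) (Fin m) E) *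
                    (alphaMat γ m
                      (∏ i, ((p.right i : Matrix (Fin (n i)) (Fin (n i)) E).det)))⁻¹) := by
  refine ⟨(PhiHom γ hγ2 hm n).range, ?_, SUgrp γ m, fun h => Iff.rfl,
    actHom γ hγ2 hm n, ?_, MonoidHom.ofInjective (PhiHom_injective γ hγ2 hm n), ?_⟩
  · intro x
    constructor
    · rintro ⟨p, rfl⟩
      exact PhiHom_mem_leviSetU γ hγ2 hm n p
    · exact leviSetU_mem_range γ hγ2 hm n
  · intro g h₀
    show ((((uAlpha γ m (dHom n g))⁻¹ * (h₀ : GL (Fin m) E) * uAlpha γ m (dHom n g) :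
        GL (Fin m) E)) : Matrix (Fin m) (Fin m) E) = _
    rw [Units.val_mul, Units.val_mul, Matrix.coe_units_inv, ← dHom_val n g]
    rfl
  · intro p
    have hco : ((MonoidHom.ofInjective (PhiHom_injective γ hγ2 hm n) p :
        (PhiHom γ hγ2 hm n).range) : GL (LeviIdx n m) E) = PhiHom γ hγ2 hm n p := rfl
    rw [hco]
    show leviMat γ n (fun i => ((p.right i : GL (Fin (n i)) E) :
        Matrix (Fin (n i)) (Fin (n i)) E))
      ((((p.left : GL (Fin m) E) * (uAlpha γ m (dHom n p.right))⁻¹ : GL (Fin m) E)) :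
        Matrix (Fin m) (Fin m) E) = _
    rw [Units.val_mul, Matrix.coe_units_inv, ← dHom_val n p.right]
    rfl
end
end

section
/- Theorem 3.9 (combinatorial form): Let n : Fin r → ℕ with n(i) > 0 for all i, and let 𝔞_M = {a : Fin r → ℂ | Σ_i n(i)·(a(i) - conj(a(i))) = 0}. Then {a ∈ 𝔞_M : w_{s,B} a = a} = {0} if and only if s is an r-cycle and B has odd cardinality. -/
/-!
Write `a = x + i y` with `x y : Fin r → ℝ`. Then `a` is fixed and traceless iff `y` is constant
on the cycles of `s` with `∑ n i * y i = 0`, and `x (s i) = ± x i`, the sign being `-` exactly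
on `B`. The `y`-part is trivial iff `s` has one cycle: otherwise a combination of the indicators
of two cycles works. On a single cycle a solution `x` of `x (s i) = σ i * x i` vanishes
everywhere or nowhere, and in the latter case `∏ x (s i) = ∏ x i` forces `∏ σ = (-1) ^ #B = 1`;
conversely, if `∏ σ = 1`, the partial products of `σ` along the cycle give a solution.
-/

open Complex

/-- The signed-permutation action `w_{s,B}` on `Fin r → ℂ`:
`(w_{s,B} a)(s i) = -conj (a i)` for `i ∈ B`, and `(w_{s,B} a)(s i) = a i` for `i ∉ B`. -/
def wAct {r : ℕ} (s : Equiv.Perm (Fin r)) (B : Finset (Fin r)) (a : Fin r → ℂ) :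
    Fin r → ℂ :=
  fun j => if s.symm j ∈ B then -(starRingEnd ℂ) (a (s.symm j)) else a (s.symm j)

open Equiv Finset

namespace Equiv.Perm

variable {α : Type*} {s : Perm α}

theorem forall_of_transitive (hs : ∀ i j, ∃ k : ℕ, (s ^ k) i = j) {P : α → Prop}
    (hP : ∀ i, P i → P (s i)) {i : α} (hi : P i) (j : α) : P j := by
  obtain ⟨k, rfl⟩ := hs i j
  induction k with
  | zero => exact hi
  | succ k ih => rw [pow_succ', mul_apply]; exact hP _ ih

theorem minimalPeriod_pos_of_transitive (hs : ∀ i j, ∃ k : ℕ, (s ^ k) i = j) (y : α) :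
    0 < Function.minimalPeriod s y := by
  obtain ⟨k, hk⟩ := hs (s y) y
  refine Function.IsPeriodicPt.minimalPeriod_pos k.succ_pos ?_
  rw [Function.IsPeriodicPt, Function.IsFixedPt, iterate_eq_pow, pow_succ, mul_apply, hk]

theorem eq_zero_of_apply_eq_mul_of_transitive {K : Type*} [MulZeroClass K]
    (hs : ∀ i j, ∃ k : ℕ, (s ^ k) i = j) {σ : α → K} {x : α → K}
    (hx : ∀ i, x (s i) = σ i * x i) {i : α} (hi : x i = 0) : x = 0 :=
  funext <| forall_of_transitive hs (P := (x · = 0)) (fun j hj => by rw [hx, hj, mul_zero]) hi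

variable [Fintype α]

theorem prod_range_minimalPeriod_of_transitive {M : Type*} [CommMonoid M]
    (hs : ∀ i j, ∃ k : ℕ, (s ^ k) i = j) (f : α → M) (y : α) :
    ∏ m ∈ range (Function.minimalPeriod s y), f ((s ^ m) y) = ∏ i, f i := by
  refine prod_nbij (fun m => (s ^ m) y) (fun _ _ => mem_univ _) ?_ ?_ fun _ _ => rfl
  · intro a ha b hb hab
    exact Function.iterate_injOn_Iio_minimalPeriod (by simpa using ha) (by simpa using hb) hab
  · intro j _
    obtain ⟨k, rfl⟩ := hs y j
    exact ⟨k % _, by simpa using Nat.mod_lt _ (minimalPeriod_pos_of_transitive hs y),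
      Function.iterate_mod_minimalPeriod_eq⟩

theorem exists_apply_eq_mul_of_prod_eq_one {M : Type*} [CommMonoid M]
    (hs : ∀ i j, ∃ k : ℕ, (s ^ k) i = j) {σ : α → M} (hσ : ∏ i, σ i = 1) (y : α) :
    ∃ x : α → M, x y = 1 ∧ ∀ i, x (s i) = σ i * x i := by
  set p := Function.minimalPeriod s y
  -- `c k` depends only on `(s ^ k) y`: a period of `y` runs once through `α`, so adds `∏ σ = 1`
  set c : ℕ → M := fun k => ∏ m ∈ range k, σ ((s ^ m) y) with hc
  have hperiodic : Function.Periodic c p := fun k => by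
    have hshift : ∀ m, (s ^ (p + m)) y = (s ^ m) y := fun m => by
      rw [add_comm, pow_add, mul_apply]
      exact congrArg _ Function.iterate_minimalPeriod
    simp only [hc, add_comm k, prod_range_add, hshift]
    rw [prod_range_minimalPeriod_of_transitive hs, hσ, one_mul]
  have hc_congr : ∀ k l, (s ^ k) y = (s ^ l) y → c k = c l := fun k l h => by
    have hp := minimalPeriod_pos_of_transitive hs y
    rw [← hperiodic.map_mod_nat k, ← hperiodic.map_mod_nat l,
      (Function.iterate_eq_iterate_iff_of_lt_minimalPeriod (Nat.mod_lt k hp)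
        (Nat.mod_lt l hp)).mp]
    simpa only [Function.iterate_mod_minimalPeriod_eq, iterate_eq_pow] using h
  choose k hk using hs y
  refine ⟨fun j => c (k j), hc_congr _ 0 (by simp [hk]), fun i => ?_⟩
  change c (k (s i)) = σ i * c (k i)
  rw [hc_congr (k (s i)) (k i + 1) (by rw [hk, pow_succ', mul_apply, hk])]
  simp only [hc, prod_range_succ, hk, mul_comm]

theorem prod_eq_one_of_apply_eq_mul {K : Type*} [CommGroupWithZero K]
    (hs : ∀ i j, ∃ k : ℕ, (s ^ k) i = j) {σ : α → K}
    {x : α → K} (hx : ∀ i, x (s i) = σ i * x i) (hx0 : x ≠ 0) : ∏ i, σ i = 1 := by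
  have hprod : ∏ i, x i ≠ 0 := prod_ne_zero_iff.mpr fun i _ hi =>
    hx0 (eq_zero_of_apply_eq_mul_of_transitive hs hx hi)
  refine mul_right_cancel₀ hprod ?_
  rw [← prod_mul_distrib, one_mul]
  simp only [← hx]
  exact Equiv.prod_comp s x

theorem exists_ne_zero_apply_eq_mul_iff [Nonempty α] {K : Type*} [CommGroupWithZero K]
    (hs : ∀ i j, ∃ k : ℕ, (s ^ k) i = j) {σ : α → K} :
    (∃ x : α → K, x ≠ 0 ∧ ∀ i, x (s i) = σ i * x i) ↔ ∏ i, σ i = 1 := by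
  refine ⟨fun ⟨x, hx0, hx⟩ => prod_eq_one_of_apply_eq_mul hs hx hx0, fun hσ => ?_⟩
  obtain ⟨x, hy, hx⟩ := exists_apply_eq_mul_of_prod_eq_one hs hσ (Classical.arbitrary α)
  exact ⟨x, fun h => one_ne_zero (hy.symm.trans (congrFun h _)), hx⟩

theorem exists_invariant_ne_zero_of_not_sameCycle {i j : α} (hij : ¬ s.SameCycle i j)
    {w : α → ℝ} (hw : ∀ x, 0 < w x) :
    ∃ y : α → ℝ, y ≠ 0 ∧ (∀ x, y (s x) = y x) ∧ ∑ x, w x * y x = 0 := by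
  classical
  let W : α → ℝ := fun z => ∑ x with s.SameCycle z x, w x
  refine ⟨fun x => (if s.SameCycle i x then W j else 0) - (if s.SameCycle j x then W i else 0),
    fun h => ?_, fun x => by simp only [sameCycle_apply_right], ?_⟩
  · have hWj : 0 < W j := sum_pos (fun x _ => hw x) ⟨j, by simp [SameCycle.refl]⟩
    have hji : ¬ s.SameCycle j i := fun h => hij h.symm
    have := congrFun h i
    simp only [SameCycle.refl, if_true, hji, if_false, sub_zero, Pi.zero_apply] at this
    exact hWj.ne' this
  · simp only [mul_sub, mul_ite, mul_zero, sum_sub_distrib, ← sum_filter, ← sum_mul, W]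
    ring

theorem exists_invariant_ne_zero_orthogonal_iff [Nonempty α] {w : α → ℝ} (hw : ∀ x, 0 < w x) :
    (∃ y : α → ℝ, y ≠ 0 ∧ (∀ x, y (s x) = y x) ∧ ∑ x, w x * y x = 0) ↔
      ¬ ∀ i j, ∃ k : ℕ, (s ^ k) i = j := by
  refine ⟨fun ⟨y, hy0, hinv, hsum⟩ hs => hy0 ?_, fun hs => ?_⟩
  · obtain ⟨i⟩ := ‹Nonempty α›
    have hconst : ∀ x, y x = y i :=
      forall_of_transitive hs (P := (y · = y i)) (fun x hx => (hinv x).trans hx) rfl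
    simp only [hconst, ← sum_mul] at hsum
    have hi : y i = 0 := (mul_eq_zero.mp hsum).resolve_left
      (sum_pos (fun x _ => hw x) univ_nonempty).ne'
    exact funext fun x => (hconst x).trans hi
  · push Not at hs
    obtain ⟨i, j, hij⟩ := hs
    refine exists_invariant_ne_zero_of_not_sameCycle (i := i) (j := j) (fun h => ?_) hw
    obtain ⟨k, -, hk⟩ := h.exists_pow_eq'
    exact hij k hk

end Equiv.Perm

theorem wAct_eq_self_iff {r : ℕ} {s : Perm (Fin r)} {B : Finset (Fin r)} {a : Fin r → ℂ} :
    wAct s B a = a ↔ ∀ i, (a (s i)).re = (if i ∈ B then -1 else 1) * (a i).re ∧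
      (a (s i)).im = (a i).im := by
  rw [funext_iff, ← s.forall_congr_right]
  refine forall_congr' fun i => ?_
  simp only [wAct, Equiv.symm_apply_apply, Complex.ext_iff]
  split_ifs <;> simp [eq_comm]

theorem sum_mul_sub_conj_eq_zero_iff {ι : Type*} [Fintype ι] (n : ι → ℕ) (a : ι → ℂ) :
    ∑ i, (n i : ℂ) * (a i - (starRingEnd ℂ) (a i)) = 0 ↔ ∑ i, (n i : ℝ) * (a i).im = 0 := by
  have h : ∑ i, (n i : ℂ) * (a i - (starRingEnd ℂ) (a i)) =
      ((2 * ∑ i, (n i : ℝ) * (a i).im : ℝ) : ℂ) * I := by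
    push_cast [sub_conj, mul_sum, sum_mul]
    exact sum_congr rfl fun i _ => by ring
  rw [h, mul_eq_zero, ofReal_eq_zero, mul_eq_zero]
  simp only [two_ne_zero, I_ne_zero, false_or, or_false]

theorem fixedSpace_eq_singleton_zero_iff {r : ℕ} (s : Perm (Fin r)) (B : Finset (Fin r))
    (n : Fin r → ℕ) :
    {a : Fin r → ℂ |
        (∑ i, (n i : ℂ) * (a i - (starRingEnd ℂ) (a i))) = 0 ∧ wAct s B a = a} = {0} ↔
      (¬ ∃ x : Fin r → ℝ, x ≠ 0 ∧ ∀ i, x (s i) = (if i ∈ B then -1 else 1) * x i) ∧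
      ¬ ∃ y : Fin r → ℝ, y ≠ 0 ∧ (∀ i, y (s i) = y i) ∧ ∑ i, (n i : ℝ) * y i = 0 := by
  have hmem : ∀ a : Fin r → ℂ,
      (∑ i, (n i : ℂ) * (a i - (starRingEnd ℂ) (a i)) = 0 ∧ wAct s B a = a) ↔
        (∀ i, (a (s i)).re = (if i ∈ B then -1 else 1) * (a i).re) ∧
        (∀ i, (a (s i)).im = (a i).im) ∧ ∑ i, (n i : ℝ) * (a i).im = 0 := fun a => by
    rw [sum_mul_sub_conj_eq_zero_iff, wAct_eq_self_iff, forall_and]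
    tauto
  rw [Set.eq_singleton_iff_unique_mem]
  constructor
  · rintro ⟨-, h0⟩
    refine ⟨fun ⟨x, hx0, hx⟩ => hx0 ?_, fun ⟨y, hy0, hy, hsum⟩ => hy0 ?_⟩
    · have ha := h0 (fun i => ⟨x i, 0⟩) ((hmem _).2 ⟨hx, by simp, by simp⟩)
      exact funext fun i => congrArg re (congrFun ha i)
    · have ha := h0 (fun i => ⟨0, y i⟩) ((hmem _).2 ⟨by simp, hy, hsum⟩)
      exact funext fun i => congrArg im (congrFun ha i)
  · rintro ⟨hre, him⟩
    refine ⟨(hmem 0).2 (by simp), fun a ha => ?_⟩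
    obtain ⟨hx, hy, hsum⟩ := (hmem a).1 ha
    have hx0 : (fun i => (a i).re) = 0 := by_contra fun h => hre ⟨_, h, hx⟩
    have hy0 : (fun i => (a i).im) = 0 := by_contra fun h => him ⟨_, h, hy, hsum⟩
    exact funext fun i => Complex.ext (congrFun hx0 i) (congrFun hy0 i)

theorem fixed_space_trivial_iff_cycle_and_odd
    {r : ℕ} (hr : 1 ≤ r) (s : Equiv.Perm (Fin r)) (B : Finset (Fin r))
    (n : Fin r → ℕ) (hn : ∀ i, 0 < n i) :
    {a : Fin r → ℂ |
        (∑ i, (n i : ℂ) * (a i - (starRingEnd ℂ) (a i))) = 0 ∧ wAct s B a = a} = {0} ↔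
      ((∀ i j : Fin r, ∃ k : ℕ, (s ^ k) i = j) ∧ Odd B.card) := by
  have : Nonempty (Fin r) := ⟨⟨0, hr⟩⟩
  rw [fixedSpace_eq_singleton_zero_iff,
    Perm.exists_invariant_ne_zero_orthogonal_iff (by exact_mod_cast hn), not_not, and_comm]
  refine and_congr_right fun hs => ?_
  rw [Perm.exists_ne_zero_apply_eq_mul_iff hs, prod_ite_mem, univ_inter, prod_const,
    neg_one_pow_eq_one_iff_even (by norm_num), Nat.not_even_iff_odd]
end

section
/- Remark 3.10 (combinatorial form): The fixed space {a : Fin r → ℂ | w_{s,B} a = a} equals the set of constant purely imaginary vectors {a : ∃ λ ∈ ℝ, ∀ i, a(i) = λ·√(-1)} if and only if s is an r-cycle and B has odd cardinality. -/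
/-!
Remark 3.10 (combinatorial form).

Setting: `r ≥ 1`, `s` a permutation of `Fin r`, `B ⊆ Fin r`.  The ℝ-linear map
`w_{s,B} : (Fin r → ℂ) → (Fin r → ℂ)` is defined by `(w_{s,B} a)(s i) = -conj (a i)` if
`i ∈ B` and `(w_{s,B} a)(s i) = a i` otherwise.

STATEMENT: the fixed space `{a : w_{s,B} a = a}` equals the set of constant purely
imaginary vectors `{a | ∃ λ ∈ ℝ, ∀ i, a i = λ·√(-1)}` iff `s` is an `r`-cycle (the
cyclic group generated by `s` acts transitively on `Fin r`) and `B` has odd cardinality.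
-/

open Complex

namespace Rem310

variable {r : ℕ}

lemma wfix_iff (s : Equiv.Perm (Fin r)) (B : Finset (Fin r)) (a : Fin r → ℂ) :
    wAct s B a = a ↔
    ∀ i, a (s i) = if i ∈ B then -(starRingEnd ℂ) (a i) else a i := by
  constructor
  · intro h i
    have := congrFun h (s i)
    simpa [wAct] using this.symm
  · intro h
    funext j
    have := h (s.symm j)
    simpa [wAct] using this.symm

lemma fixed_iterate (s : Equiv.Perm (Fin r)) (B : Finset (Fin r)) (a : Fin r → ℂ)
    (ha : ∀ i, a (s i) = if i ∈ B then -(starRingEnd ℂ) (a i) else a i) (i : Fin r) :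
    ∀ k : ℕ, a ((s ^ k) i) =
      if Even (((Finset.range k).filter (fun m => (s ^ m) i ∈ B)).card)
      then a i else -(starRingEnd ℂ) (a i) := by
  intro k
  induction k with
  | zero => simp
  | succ k ih =>
    have h1 : (s ^ (k+1)) i = s ((s ^ k) i) := by
      rw [pow_succ']; rfl
    have h2 : ((Finset.range (k+1)).filter (fun m => (s ^ m) i ∈ B)).card
        = ((Finset.range k).filter (fun m => (s ^ m) i ∈ B)).card
          + (if (s ^ k) i ∈ B then 1 else 0) := by
      rw [Finset.range_add_one, Finset.filter_insert]
      by_cases h : (s ^ k) i ∈ B <;> simp [h, Finset.card_insert_of_notMem, Finset.mem_filter]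
    rw [h1, ha ((s ^ k) i), ih, h2]
    by_cases hB : (s ^ k) i ∈ B <;>
      by_cases he : Even (((Finset.range k).filter (fun m => (s ^ m) i ∈ B)).card) <;>
        simp [hB, he, Nat.even_add_one, map_neg]

lemma orbit_facts (hr : 1 ≤ r) (s : Equiv.Perm (Fin r))
    (h : ∀ j : Fin r, ∃ k : ℕ, (s ^ k) (⟨0, hr⟩ : Fin r) = j) :
    (s ^ r) (⟨0, hr⟩ : Fin r) = (⟨0, hr⟩ : Fin r) ∧
    Set.InjOn (fun m : ℕ => (s ^ m) (⟨0, hr⟩ : Fin r)) (Set.Iio r) := by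
  set z : Fin r := ⟨0, hr⟩
  set p := Function.minimalPeriod (⇑s) z with hp
  have hiter : ∀ m : ℕ, (⇑s)^[m] z = (s ^ m) z := fun m => by
    rw [Equiv.Perm.iterate_eq_pow]
  have hper : z ∈ Function.periodicPts (⇑s) := by
    refine ⟨orderOf s, orderOf_pos s, ?_⟩
    rw [Function.IsPeriodicPt, Function.IsFixedPt, hiter, pow_orderOf_eq_one]
    rfl
  have hinj : Set.InjOn (fun m : ℕ => (s ^ m) z) (Set.Iio p) := by
    intro m hm n hn hmn
    exact Function.iterate_injOn_Iio_minimalPeriod hm hn (by simpa [hiter] using hmn)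
  have hple : p ≤ r := by
    have := Finset.card_le_card_of_injOn (fun m : ℕ => (s ^ m) z)
      (fun m _ => Finset.mem_univ _)
      (fun m hm n hn hmn => hinj (by simpa using Finset.mem_range.mp hm)
        (by simpa using Finset.mem_range.mp hn) hmn)
      (s := Finset.range p) (t := Finset.univ)
    simpa using this
  have hsurj : ∀ j : Fin r, ∃ m < p, (s ^ m) z = j := by
    intro j
    obtain ⟨k, hk⟩ := h j
    refine ⟨k % p, Nat.mod_lt _ (Function.minimalPeriod_pos_of_mem_periodicPts hper), ?_⟩
    rw [← hiter, hp, Function.iterate_mod_minimalPeriod_eq, hiter, hk]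
  have hrle : r ≤ p := by
    have hsub : (Finset.univ : Finset (Fin r)) ⊆ (Finset.range p).image (fun m => (s ^ m) z) := by
      intro j _
      obtain ⟨m, hm, hmj⟩ := hsurj j
      exact Finset.mem_image.mpr ⟨m, Finset.mem_range.mpr hm, hmj⟩
    calc r = (Finset.univ : Finset (Fin r)).card := by simp
    _ ≤ ((Finset.range p).image (fun m => (s ^ m) z)).card := Finset.card_le_card hsub
    _ ≤ p := le_trans (Finset.card_image_le) (by simp)
  have hpr : p = r := le_antisymm hple hrle
  constructor
  · have := Function.iterate_minimalPeriod (f := ⇑s) (x := z)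
    rw [hiter] at this
    rw [← hp] at this
    rwa [hpr] at this
  · rwa [hpr] at hinj

lemma count_eq (hr : 1 ≤ r) (s : Equiv.Perm (Fin r)) (B : Finset (Fin r))
    (h : ∀ j : Fin r, ∃ k : ℕ, (s ^ k) (⟨0, hr⟩ : Fin r) = j) :
    ((Finset.range r).filter (fun m => (s ^ m) (⟨0, hr⟩ : Fin r) ∈ B)).card = B.card := by
  set z : Fin r := ⟨0, hr⟩
  obtain ⟨-, hinj⟩ := orbit_facts hr s h
  have hinj' : Set.InjOn (fun m : ℕ => (s ^ m) z) ↑(Finset.range r) := by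
    rwa [Finset.coe_range]
  have himg : (Finset.range r).image (fun m => (s ^ m) z) = Finset.univ := by
    apply Finset.eq_univ_of_card
    rw [Finset.card_image_of_injOn hinj']
    simp
  have himg2 : ((Finset.range r).filter (fun m => (s ^ m) z ∈ B)).image
      (fun m => (s ^ m) z) = B := by
    ext x
    simp only [Finset.mem_image, Finset.mem_filter, Finset.mem_range]
    constructor
    · rintro ⟨m, ⟨-, hmB⟩, rfl⟩; exact hmB
    · intro hx
      have : x ∈ (Finset.range r).image (fun m => (s ^ m) z) := by
        rw [himg]; exact Finset.mem_univ x
      obtain ⟨m, hm, rfl⟩ := Finset.mem_image.mp this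
      exact ⟨m, ⟨Finset.mem_range.mp hm, hx⟩, rfl⟩
  have hsubset : (↑((Finset.range r).filter (fun m => (s ^ m) z ∈ B)) : Set ℕ)
      ⊆ ↑(Finset.range r) := Finset.coe_subset.mpr (Finset.filter_subset _ _)
  rw [← Finset.card_image_of_injOn (hinj'.mono hsubset), himg2]

lemma even_counterexample (hr : 1 ≤ r) (s : Equiv.Perm (Fin r)) (B : Finset (Fin r))
    (h : ∀ j : Fin r, ∃ k : ℕ, (s ^ k) (⟨0, hr⟩ : Fin r) = j) (heven : Even B.card) :
    ∃ a : Fin r → ℂ,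
      (∀ i, a (s i) = if i ∈ B then -(starRingEnd ℂ) (a i) else a i) ∧
      a (⟨0, hr⟩ : Fin r) = 1 := by
  set z : Fin r := ⟨0, hr⟩ with hz
  obtain ⟨hret, hinj⟩ := orbit_facts hr s h
  set c : ℕ → ℕ := fun k => ((Finset.range k).filter (fun m => (s ^ m) z ∈ B)).card with hc
  set e : Fin r → Fin r := fun m => (s ^ (m : ℕ)) z with he
  have einj : Function.Injective e := fun m n hmn =>
    Fin.ext (hinj m.isLt n.isLt hmn)
  have eb : Function.Bijective e := Finite.injective_iff_bijective.mp einj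
  set E := Equiv.ofBijective e eb with hE
  set d := E.symm with hd
  have hEd : ∀ x, e (d x) = x := fun x => E.apply_symm_apply x
  have hdz : d z = ⟨0, hr⟩ := by
    have h0 : E ⟨0, hr⟩ = z := by show e ⟨0, hr⟩ = z; simp [he]
    rw [hd, Equiv.symm_apply_eq]
    exact h0.symm
  refine ⟨fun x => (-1 : ℂ) ^ (c ((d x : Fin r) : ℕ)), ?_, ?_⟩
  · intro x
    show (-1 : ℂ) ^ (c ((d (s x) : Fin r) : ℕ)) =
      if x ∈ B then -(starRingEnd ℂ) ((-1 : ℂ) ^ (c ((d x : Fin r) : ℕ)))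
      else (-1 : ℂ) ^ (c ((d x : Fin r) : ℕ))
    set m : ℕ := ((d x : Fin r) : ℕ) with hm
    have hmr : m < r := (d x).isLt
    have hx : (s ^ m) z = x := hEd x
    have hsx : s x = (s ^ (m + 1)) z := by rw [← hx, pow_succ']; rfl
    have hcs : c (m + 1) = c m + (if x ∈ B then 1 else 0) := by
      rw [hc]
      simp only [Finset.range_add_one, Finset.filter_insert]
      by_cases hB : x ∈ B
      · rw [if_pos (by rwa [hx]), Finset.card_insert_of_notMem (by simp), if_pos hB]
      · rw [if_neg (by rwa [hx]), if_neg hB, add_zero]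
    have key : (-1 : ℂ) ^ (c ((d (s x) : Fin r) : ℕ)) = (-1 : ℂ) ^ (c (m + 1)) := by
      by_cases hm1 : m + 1 < r
      · have : d (s x) = ⟨m + 1, hm1⟩ := by
          rw [hd, Equiv.symm_apply_eq]
          show s x = e ⟨m + 1, hm1⟩
          rw [hsx]
        rw [this]
      · have hm1' : m + 1 = r := by omega
        have hsxz : s x = z := by rw [hsx, hm1']; exact hret
        have hcB : c (m + 1) = B.card := by rw [hm1']; exact count_eq hr s B h
        rw [hsxz, hdz]
        have h0 : c ((⟨0, hr⟩ : Fin r) : ℕ) = 0 := by simp [hc]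
        rw [h0, hcB, pow_zero, heven.neg_one_pow]
    rw [key, hcs]
    by_cases hB : x ∈ B
    · rw [if_pos hB, if_pos hB]
      rw [pow_add, pow_one]
      have : (starRingEnd ℂ) ((-1 : ℂ) ^ (c m)) = (-1 : ℂ) ^ (c m) := by
        rw [map_pow, map_neg, map_one]
      rw [this]
      ring
    · rw [if_neg hB, if_neg hB, add_zero]
  · show (-1 : ℂ) ^ (c ((d z : Fin r) : ℕ)) = 1
    rw [hdz]
    simp [hc]

end Rem310

theorem fixed_space_eq_imaginary_constants_iff_cycle_and_odd
    {r : ℕ} (hr : 1 ≤ r) (s : Equiv.Perm (Fin r)) (B : Finset (Fin r)) :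
    {a : Fin r → ℂ | wAct s B a = a} =
        {a : Fin r → ℂ | ∃ lam : ℝ, ∀ i, a i = (lam : ℂ) * Complex.I} ↔
      ((∀ i j : Fin r, ∃ k : ℕ, (s ^ k) i = j) ∧ Odd B.card) := by
  classical
  set z : Fin r := ⟨0, hr⟩ with hz
  constructor
  · intro hset
    -- first, transitivity
    have htrans : ∀ i j : Fin r, ∃ k : ℕ, (s ^ k) i = j := by
      intro i j
      by_contra hne
      push_neg at hne
      set a : Fin r → ℂ := fun x => if ∃ k : ℕ, (s ^ k) i = x then Complex.I else 0 with ha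
      have horb : ∀ x : Fin r, (∃ k : ℕ, (s ^ k) i = s x) ↔ (∃ k : ℕ, (s ^ k) i = x) := by
        intro x
        constructor
        · rintro ⟨k, hk⟩
          refine ⟨(orderOf s - 1) + k, ?_⟩
          rw [pow_add, Equiv.Perm.mul_apply, hk, ← Equiv.Perm.mul_apply, ← pow_succ,
            Nat.sub_add_cancel (orderOf_pos s), pow_orderOf_eq_one, Equiv.Perm.one_apply]
        · rintro ⟨k, hk⟩
          exact ⟨k + 1, by rw [pow_succ', Equiv.Perm.mul_apply, hk]⟩
      have hfix : wAct s B a = a := by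
        rw [Rem310.wfix_iff]
        intro x
        by_cases hx : ∃ k : ℕ, (s ^ k) i = x
        · have h1 : a (s x) = Complex.I := by
            rw [ha]; simp only; rw [if_pos ((horb x).mpr hx)]
          have h2 : a x = Complex.I := by
            rw [ha]; simp only; rw [if_pos hx]
          rw [h1, h2]
          by_cases hB : x ∈ B <;> simp [hB, Complex.conj_I]
        · have h1 : a (s x) = 0 := by
            rw [ha]; simp only; rw [if_neg (fun hc => hx ((horb x).mp hc))]
          have h2 : a x = 0 := by
            rw [ha]; simp only; rw [if_neg hx]
          rw [h1, h2]
          by_cases hB : x ∈ B <;> simp [hB]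
      have hmem : a ∈ {a : Fin r → ℂ | ∃ lam : ℝ, ∀ i, a i = (lam : ℂ) * Complex.I} := by
        rw [← hset]; exact hfix
      obtain ⟨lam, hlam⟩ := hmem
      have hai : a i = Complex.I := by
        rw [ha]; simp only; rw [if_pos ⟨0, rfl⟩]
      have haj : a j = 0 := by
        rw [ha]; simp only; rw [if_neg (by exact fun ⟨k, hk⟩ => hne k hk)]
      have : (Complex.I : ℂ) = 0 := by
        rw [← hai, hlam i, ← hlam j, haj]
      exact Complex.I_ne_zero this
    refine ⟨htrans, ?_⟩
    -- now oddness
    by_contra hodd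
    rw [Nat.not_odd_iff_even] at hodd
    obtain ⟨a, ha, ha0⟩ := Rem310.even_counterexample hr s B (fun j => htrans z j) hodd
    have hmem : a ∈ {a : Fin r → ℂ | ∃ lam : ℝ, ∀ i, a i = (lam : ℂ) * Complex.I} := by
      rw [← hset]
      exact (Rem310.wfix_iff s B a).mpr ha
    obtain ⟨lam, hlam⟩ := hmem
    have := hlam z
    rw [ha0] at this
    have := congrArg Complex.re this
    simp at this
  · rintro ⟨htrans, hodd⟩
    ext a
    simp only [Set.mem_setOf_eq]
    constructor
    · intro hfix
      rw [Rem310.wfix_iff] at hfix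
      have hcount := Rem310.count_eq hr s B (fun j => htrans z j)
      have hiter := Rem310.fixed_iterate s B a hfix z r
      rw [hcount, if_neg (by rwa [Nat.not_even_iff_odd])] at hiter
      obtain ⟨hret, -⟩ := Rem310.orbit_facts hr s (fun j => htrans z j)
      rw [hret] at hiter
      -- a z = -conj (a z), so a z is purely imaginary
      have hre : (a z).re = 0 := by
        have := congrArg Complex.re hiter
        simp at this
        linarith
      refine ⟨(a z).im, fun i => ?_⟩
      obtain ⟨k, hk⟩ := htrans z i
      rw [← hk]
      -- propagate
      have prop : ∀ k : ℕ, a ((s ^ k) z) = ((a z).im : ℂ) * Complex.I := by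
        intro k
        induction k with
        | zero =>
          simp only [pow_zero, Equiv.Perm.one_apply]
          apply Complex.ext <;> simp [hre]
        | succ k ih =>
          have h1 : (s ^ (k+1)) z = s ((s ^ k) z) := by rw [pow_succ']; rfl
          rw [h1, hfix ((s ^ k) z), ih]
          by_cases hB : (s ^ k) z ∈ B <;>
            simp [hB, map_mul, Complex.conj_I, Complex.conj_ofReal]
      exact prop k
    · rintro ⟨lam, hlam⟩
      rw [Rem310.wfix_iff]
      intro i
      rw [hlam (s i), hlam i]
      by_cases hB : i ∈ B <;> simp [hB, map_mul, Complex.conj_I, Complex.conj_ofReal]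
end

section
/- Theorem 3.7 (abstract form): The set Γ = {w ∈ R : supp(w) ∩ B₀ = ∅} is a subgroup of R; Γ ∩ ker φ is trivial; every element of R is a product of an element of Γ and an element of ker φ; hence R is the internal semidirect product Γ ⋉ ker φ. Moreover φ restricted to Γ is injective, so Γ is isomorphic to the image of φ. -/
/-!
The kernel `{C_B : B ⊆ B₀}` of `φ` is normal in `R` and `w C_{i} w⁻¹ = C_{s_w(i)}`, so the
permutation part of every `w ∈ R` stabilises `B₀`. Hence the elements of `R` with no sign change
on `B₀` form a subgroup `Γ`, and with `S = supp w ∩ B₀` the factorisation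
`w = (C_S w) · C_{s_w⁻¹(S)}` writes every `w ∈ R` as an element of `Γ` times one of `ker φ`.
A sign change `C_B` with `B ⊆ B₀` lies in `Γ` only for `B = ∅`, so `Γ` is a complement of
`ker φ` and `φ` maps it isomorphically onto its image.
-/

open Multiplicative

/-- The action of a permutation `s` of `Fin r` on sign vectors `c : Fin r → ZMod 2`
(written multiplicatively), given by `(s • c) (s i) = c i`. -/
def permMulAut (r : ℕ) : Equiv.Perm (Fin r) →* MulAut (Multiplicative (Fin r → ZMod 2)) where
  toFun s := AddEquiv.toMultiplicative (AddEquiv.arrowCongr s (AddEquiv.refl (ZMod 2)))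
  map_one' := by ext c; rfl
  map_mul' s t := by ext c; rfl

/-- The group `W_r = (Fin r → ZMod 2) ⋊ Perm (Fin r)` of signed permutations, with
multiplication `(c₁, s₁)·(c₂, s₂) = (c₁ + s₁ • c₂, s₁ s₂)`. -/
abbrev SignedPerm (r : ℕ) : Type :=
  (Multiplicative (Fin r → ZMod 2)) ⋊[permMulAut r] (Equiv.Perm (Fin r))

/-- The sign-change element `C_B = (1_B, id)` attached to `B ⊆ Fin r`. -/
def CB {r : ℕ} (B : Finset (Fin r)) : SignedPerm r :=
  ⟨Multiplicative.ofAdd (fun i => if i ∈ B then 1 else 0), 1⟩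

/-- The support `supp w = {i : c i = 1}` of the sign part of a signed permutation. -/
def suppW {r : ℕ} (w : SignedPerm r) : Finset (Fin r) :=
  Finset.univ.filter (fun i => Multiplicative.toAdd w.left i = 1)

namespace SignedPerm

variable {r : ℕ}

lemma zmod_two_eq_zero_or_eq_one (x : ZMod 2) : x = 0 ∨ x = 1 := by
  revert x; decide

@[ext]
lemma ext {w₁ w₂ : SignedPerm r} (h₁ : ∀ i, toAdd w₁.left i = toAdd w₂.left i)
    (h₂ : w₁.right = w₂.right) : w₁ = w₂ :=
  SemidirectProduct.ext (toAdd.injective (funext h₁)) h₂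

lemma toAdd_left_one_apply (i : Fin r) : toAdd (1 : SignedPerm r).left i = 0 := rfl

lemma toAdd_left_mul_apply (w₁ w₂ : SignedPerm r) (i : Fin r) :
    toAdd (w₁ * w₂).left i = toAdd w₁.left i + toAdd w₂.left (w₁.right.symm i) := rfl

lemma toAdd_left_inv_apply (w : SignedPerm r) (i : Fin r) :
    toAdd w⁻¹.left i = -toAdd w.left (w.right i) := rfl

lemma toAdd_left_CB_apply (B : Finset (Fin r)) (i : Fin r) :
    toAdd (CB B).left i = if i ∈ B then 1 else 0 := rfl

lemma CB_right (B : Finset (Fin r)) : (CB B).right = 1 := rfl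

lemma mem_suppW {w : SignedPerm r} {i : Fin r} : i ∈ suppW w ↔ toAdd w.left i = 1 := by
  simp [suppW]

lemma suppW_inter_eq_empty_iff {w : SignedPerm r} {B₀ : Finset (Fin r)} :
    suppW w ∩ B₀ = ∅ ↔ ∀ i ∈ B₀, toAdd w.left i = 0 := by
  simp only [Finset.eq_empty_iff_forall_notMem, Finset.mem_inter, mem_suppW, not_and']
  refine forall₂_congr fun i _ => ?_
  rcases zmod_two_eq_zero_or_eq_one (toAdd w.left i) with h | h <;> simp [h]

lemma suppW_CB (B : Finset (Fin r)) : suppW (CB B) = B := by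
  ext i
  rw [mem_suppW, toAdd_left_CB_apply]
  split_ifs with h <;> simp [h]

lemma CB_injective : Function.Injective (CB : Finset (Fin r) → SignedPerm r) :=
  Function.LeftInverse.injective suppW_CB

lemma CB_empty : CB (∅ : Finset (Fin r)) = 1 := by
  ext i <;> rfl

lemma CB_mul_self (B : Finset (Fin r)) : CB B * CB B = 1 := by
  ext i
  · simp only [toAdd_left_mul_apply, toAdd_left_CB_apply, CB_right, toAdd_left_one_apply]
    exact CharTwo.add_self_eq_zero _
  · rfl

lemma toAdd_left_CB_mul_apply (B : Finset (Fin r)) (w : SignedPerm r) (i : Fin r) :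
    toAdd (CB B * w).left i = (if i ∈ B then 1 else 0) + toAdd w.left i := rfl

lemma mul_CB_mul_inv (w : SignedPerm r) (B : Finset (Fin r)) :
    w * CB B * w⁻¹ = CB (B.image w.right) := by
  ext i
  · have hmem : w.right.symm i ∈ B ↔ i ∈ B.image w.right := by
      rw [← Finset.mem_coe, ← Set.mem_image_equiv, ← Finset.coe_image, Finset.mem_coe]
    simp only [toAdd_left_mul_apply, toAdd_left_inv_apply, toAdd_left_CB_apply,
      SemidirectProduct.mul_right, CB_right, mul_one, Equiv.apply_symm_apply, hmem]
    ring
  · simp [CB_right]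

lemma mul_CB_image_symm (w : SignedPerm r) (B : Finset (Fin r)) :
    w * CB (B.image w.right.symm) = CB B * w := by
  rw [← mul_inv_eq_iff_eq_mul, mul_CB_mul_inv, Finset.image_image, Equiv.self_comp_symm,
    Finset.image_id]

lemma toAdd_left_CB_suppW_inter_mul_apply (w : SignedPerm r) {B₀ : Finset (Fin r)} {i : Fin r}
    (hi : i ∈ B₀) : toAdd (CB (suppW w ∩ B₀) * w).left i = 0 := by
  simp only [toAdd_left_CB_mul_apply, Finset.mem_inter, mem_suppW, hi, and_true]
  rcases zmod_two_eq_zero_or_eq_one (toAdd w.left i) with h | h <;>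
    simp [h, CharTwo.add_self_eq_zero]

/-- Inside `R` the stabilisation condition is automatic (`right_apply_mem_iff`); it is what makes
this a subgroup of `W_r`. -/
def unsignedOn (B₀ : Finset (Fin r)) : Subgroup (SignedPerm r) where
  carrier := {w | (∀ i, w.right i ∈ B₀ ↔ i ∈ B₀) ∧ ∀ i ∈ B₀, toAdd w.left i = 0}
  one_mem' := ⟨fun _ => Iff.rfl, fun _ _ => rfl⟩
  mul_mem' := by
    rintro w₁ w₂ ⟨hstab₁, hzero₁⟩ ⟨hstab₂, hzero₂⟩
    refine ⟨fun i => (hstab₁ _).trans (hstab₂ i), fun i hi => ?_⟩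
    have hi' : w₁.right.symm i ∈ B₀ := by rwa [← hstab₁, Equiv.apply_symm_apply]
    rw [toAdd_left_mul_apply, hzero₁ i hi, hzero₂ _ hi', add_zero]
  inv_mem' := by
    rintro w ⟨hstab, hzero⟩
    refine ⟨fun i => ?_, fun i hi => ?_⟩
    · rw [← hstab, SemidirectProduct.inv_right, Equiv.Perm.inv_def, Equiv.apply_symm_apply]
    · rw [toAdd_left_inv_apply, hzero _ ((hstab i).mpr hi), neg_zero]

end SignedPerm

open SignedPerm

section Complement

variable {G A : Type*} [Group G] [Group A] {H K : Subgroup G} (φ : K →* A)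

lemma injOn_of_eq_one_of_map_eq_one
    (htriv : ∀ k : K, φ k = 1 → (k : G) ∈ H → (k : G) = 1) :
    Set.InjOn φ {k | (k : G) ∈ H} := by
  intro k₁ hk₁ k₂ hk₂ h
  have hone : φ (k₁⁻¹ * k₂) = 1 := by rw [map_mul, map_inv, h, inv_mul_cancel]
  have hmem : ((k₁⁻¹ * k₂ : K) : G) ∈ H := H.mul_mem (H.inv_mem hk₁) hk₂
  exact inv_mul_eq_one.mp (Subtype.ext (htriv _ hone hmem))

lemma range_comp_inclusion_eq (hHK : H ≤ K)
    (hdecomp : ∀ k : K, ∃ (a : G) (b : K), a ∈ H ∧ φ b = 1 ∧ (k : G) = a * b) :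
    (φ.comp (Subgroup.inclusion hHK)).range = φ.range := by
  refine le_antisymm (fun _ ⟨a, ha⟩ => ⟨_, ha⟩) ?_
  rintro _ ⟨k, rfl⟩
  obtain ⟨a, b, ha, hb, hk⟩ := hdecomp k
  refine ⟨⟨a, ha⟩, ?_⟩
  rw [show k = Subgroup.inclusion hHK ⟨a, ha⟩ * b from Subtype.ext hk, map_mul, hb, mul_one]
  rfl

end Complement

section Kernel

variable {r : ℕ} {R : Subgroup (SignedPerm r)} {B₀ : Finset (Fin r)} {A : Type*} [Group A]
  {φ : R →* A} (hCB : ∀ B : Finset (Fin r), B ⊆ B₀ → CB B ∈ R)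
  (hker : ∀ w : R, φ w = 1 ↔ ∃ B : Finset (Fin r), B ⊆ B₀ ∧ (w : SignedPerm r) = CB B)
include hCB hker

lemma right_apply_mem_of_mem {w : SignedPerm r} (hw : w ∈ R) {i : Fin r} (hi : i ∈ B₀) :
    w.right i ∈ B₀ := by
  have hi' : {i} ⊆ B₀ := Finset.singleton_subset_iff.mpr hi
  let c : R := ⟨CB {i}, hCB _ hi'⟩
  have hconj : φ (⟨w, hw⟩ * c * (⟨w, hw⟩)⁻¹) = 1 := by
    rw [map_mul, map_mul, (hker c).mpr ⟨_, hi', rfl⟩, mul_one, map_inv, mul_inv_cancel]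
  obtain ⟨B, hB, hconj_eq⟩ := (hker _).mp hconj
  have hB_eq : {w.right i} = B := by
    apply CB_injective
    rw [← hconj_eq, ← Finset.image_singleton, ← mul_CB_mul_inv]
    rfl
  exact hB (hB_eq ▸ Finset.mem_singleton_self _)

lemma right_apply_mem_iff {w : SignedPerm r} (hw : w ∈ R) (i : Fin r) :
    w.right i ∈ B₀ ↔ i ∈ B₀ := by
  refine ⟨fun h => ?_, right_apply_mem_of_mem hCB hker hw⟩
  simpa using right_apply_mem_of_mem hCB hker (R.inv_mem hw) h

lemma mem_unsignedOn_iff {w : SignedPerm r} (hw : w ∈ R) :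
    w ∈ unsignedOn B₀ ↔ suppW w ∩ B₀ = ∅ := by
  rw [suppW_inter_eq_empty_iff]
  exact and_iff_right (right_apply_mem_iff hCB hker hw)

lemma eq_one_of_map_eq_one_of_mem_unsignedOn (w : R) (hw : φ w = 1)
    (hwΓ : (w : SignedPerm r) ∈ unsignedOn B₀) : (w : SignedPerm r) = 1 := by
  obtain ⟨B, hB, hwB⟩ := (hker w).mp hw
  have hB_empty := (mem_unsignedOn_iff hCB hker w.2).mp hwΓ
  rw [hwB, suppW_CB, Finset.inter_eq_left.mpr hB] at hB_empty
  rw [hwB, hB_empty, CB_empty]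

lemma exists_eq_unsignedOn_mul_ker (w : R) :
    ∃ (a : SignedPerm r) (b : R), a ∈ R ⊓ unsignedOn B₀ ∧ φ b = 1 ∧
      (w : SignedPerm r) = a * b := by
  set B := (suppW (w : SignedPerm r) ∩ B₀).image (w : SignedPerm r).right.symm
  have hB : B ⊆ B₀ := by
    simp only [B, Finset.image_subset_iff, Finset.mem_inter]
    intro i hi
    rw [← right_apply_mem_iff hCB hker w.2, Equiv.apply_symm_apply]
    exact hi.2
  have hwB : (w : SignedPerm r) * CB B = CB (suppW w ∩ B₀) * w := mul_CB_image_symm _ _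
  refine ⟨_, ⟨CB B, hCB B hB⟩, ⟨R.mul_mem w.2 (hCB B hB), ?_⟩, (hker _).mpr ⟨B, hB, rfl⟩,
    ?_⟩
  · rw [hwB]
    exact ⟨right_apply_mem_iff (w := w) hCB hker w.2,
      fun i hi => toAdd_left_CB_suppW_inter_mul_apply _ hi⟩
  · rw [mul_assoc, CB_mul_self, mul_one]

end Kernel

theorem R_group_semidirect_decomposition_general
    {r : ℕ} (R : Subgroup (SignedPerm r)) (B₀ : Finset (Fin r))
    {A : Type*} [Group A] (φ : ↥R →* A)
    (hCB : ∀ B : Finset (Fin r), B ⊆ B₀ → CB B ∈ R)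
    (hker : ∀ w : ↥R, φ w = 1 ↔
      ∃ B : Finset (Fin r), B ⊆ B₀ ∧ (w : SignedPerm r) = CB B) :
    ∃ Γ : Subgroup (SignedPerm r),
      -- `Γ = {w ∈ R : supp w ∩ B₀ = ∅}` is a subgroup (of `W_r`, contained in `R`)
      ((Γ : Set (SignedPerm r)) =
        {w : SignedPerm r | w ∈ R ∧ suppW w ∩ B₀ = ∅}) ∧
      -- `Γ ∩ ker φ` is trivial
      (∀ w : ↥R, φ w = 1 → (w : SignedPerm r) ∈ Γ → (w : SignedPerm r) = 1) ∧
      -- every element of `R` is a product of an element of `Γ` and one of `ker φ`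
      (∀ w : ↥R, ∃ (a : SignedPerm r) (b : ↥R), a ∈ Γ ∧ φ b = 1 ∧
        (w : SignedPerm r) = a * (b : SignedPerm r)) ∧
      -- `φ` is injective on `Γ`
      (∀ w₁ w₂ : ↥R, (w₁ : SignedPerm r) ∈ Γ → (w₂ : SignedPerm r) ∈ Γ →
        φ w₁ = φ w₂ → w₁ = w₂) ∧
      -- so `Γ` is isomorphic to the image of `φ`
      ∃ e : ↥Γ ≃* ↥φ.range,
        ∀ (g : ↥Γ) (hg : (g : SignedPerm r) ∈ R), (e g : A) = φ ⟨(g : SignedPerm r), hg⟩ := by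
  have hΓR : R ⊓ unsignedOn B₀ ≤ R := inf_le_left
  have htriv : ∀ w : R, φ w = 1 → (w : SignedPerm r) ∈ R ⊓ unsignedOn B₀ →
      (w : SignedPerm r) = 1 :=
    fun w hw hwΓ => eq_one_of_map_eq_one_of_mem_unsignedOn hCB hker w hw hwΓ.2
  have hdecomp := exists_eq_unsignedOn_mul_ker hCB hker
  have hinjOn := injOn_of_eq_one_of_map_eq_one φ htriv
  have hinj : Function.Injective (φ.comp (Subgroup.inclusion hΓR)) :=
    fun g₁ g₂ h => Subgroup.inclusion_injective hΓR (hinjOn g₁.2 g₂.2 h)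
  refine ⟨R ⊓ unsignedOn B₀, ?_, htriv, hdecomp, fun _ _ h₁ h₂ h => hinjOn h₁ h₂ h,
    (MonoidHom.ofInjective hinj).trans
      (MulEquiv.subgroupCongr (range_comp_inclusion_eq φ hΓR hdecomp)), fun _ _ => rfl⟩
  ext w
  exact and_congr_right (mem_unsignedOn_iff hCB hker)

theorem R_group_semidirect_decomposition
    {r : ℕ} (hr : 1 ≤ r) (R : Subgroup (SignedPerm r)) (B₀ : Finset (Fin r))
    {A : Type*} [Group A] (φ : ↥R →* A)
    (hCB : ∀ B : Finset (Fin r), B ⊆ B₀ → CB B ∈ R)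
    (hker : ∀ w : ↥R, φ w = 1 ↔
      ∃ B : Finset (Fin r), B ⊆ B₀ ∧ (w : SignedPerm r) = CB B) :
    ∃ Γ : Subgroup (SignedPerm r),
      -- `Γ = {w ∈ R : supp w ∩ B₀ = ∅}` is a subgroup (of `W_r`, contained in `R`)
      ((Γ : Set (SignedPerm r)) =
        {w : SignedPerm r | w ∈ R ∧ suppW w ∩ B₀ = ∅}) ∧
      -- `Γ ∩ ker φ` is trivial
      (∀ w : ↥R, φ w = 1 → (w : SignedPerm r) ∈ Γ → (w : SignedPerm r) = 1) ∧
      -- every element of `R` is a product of an element of `Γ` and one of `ker φ`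
      (∀ w : ↥R, ∃ (a : SignedPerm r) (b : ↥R), a ∈ Γ ∧ φ b = 1 ∧
        (w : SignedPerm r) = a * (b : SignedPerm r)) ∧
      -- `φ` is injective on `Γ`
      (∀ w₁ w₂ : ↥R, (w₁ : SignedPerm r) ∈ Γ → (w₂ : SignedPerm r) ∈ Γ →
        φ w₁ = φ w₂ → w₁ = w₂) ∧
      -- so `Γ` is isomorphic to the image of `φ`
      ∃ e : ↥Γ ≃* ↥φ.range,
        ∀ (g : ↥Γ) (hg : (g : SignedPerm r) ∈ R), (e g : A) = φ ⟨(g : SignedPerm r), hg⟩ :=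
  R_group_semidirect_decomposition_general R B₀ φ hCB hker
end

section
/- Lemma 3.8(b) (abstract form): For every w ∈ R, the permutation part s_w maps B₀ onto B₀, i.e. s_w(B₀) = B₀. -/
/-! Lemma 3.8(b) (abstract form): the permutation part of every `w ∈ R` preserves `B₀`. -/

open Multiplicative

theorem perm_part_preserves_B₀
    {r : ℕ} (hr : 1 ≤ r) (R : Subgroup (SignedPerm r)) (B₀ : Finset (Fin r))
    {A : Type*} [Group A] (φ : ↥R →* A)
    (hCB : ∀ B : Finset (Fin r), B ⊆ B₀ → CB B ∈ R)
    (hker : ∀ w : ↥R, φ w = 1 ↔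
      ∃ B : Finset (Fin r), B ⊆ B₀ ∧ (w : SignedPerm r) = CB B)
    (w : ↥R) :
    B₀.image (w : SignedPerm r).right = B₀ := by
  set s := (w : SignedPerm r).right with hs
  have hsub : ∀ i ∈ B₀, s i ∈ B₀ := by
    intro i hi
    have hmem : CB {i} ∈ R := hCB {i} (by simpa using hi)
    set u : ↥R := w * ⟨CB {i}, hmem⟩ * w⁻¹ with hu
    have hφC : φ ⟨CB {i}, hmem⟩ = 1 :=
      (hker _).mpr ⟨{i}, by simpa using hi, rfl⟩
    have hφu : φ u = 1 := by
      simp [hu, map_mul, hφC]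
    obtain ⟨B, hB, heq⟩ := (hker u).mp hφu
    have hleft : Multiplicative.toAdd ((u : SignedPerm r).left) (s i)
        = Multiplicative.toAdd ((CB B).left) (s i) := by rw [heq]
    have hval : Multiplicative.toAdd ((u : SignedPerm r).left) (s i) = 1 := by
      have : (u : SignedPerm r) = (w : SignedPerm r) * CB {i} * (w : SignedPerm r)⁻¹ := rfl
      rw [this]
      simp only [SemidirectProduct.mul_left, SemidirectProduct.inv_left,
        SemidirectProduct.mul_right, map_mul]
      have hr1 : (CB {i} : SignedPerm r).right = 1 := rfl
      rw [hr1, map_one, mul_one, ← MulAut.mul_apply, ← map_mul, mul_inv_cancel,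
        map_one, MulAut.one_apply]
      simp only [toAdd_mul, toAdd_inv, Pi.add_apply, Pi.neg_apply]
      have hb : Multiplicative.toAdd ((permMulAut r) ((w : SignedPerm r).right) (CB {i}).left) (s i)
          = 1 := by
        show (if s⁻¹ (s i) ∈ ({i} : Finset (Fin r)) then (1 : ZMod 2) else 0) = 1
        simp
      rw [hb]
      ring
    rw [hval] at hleft
    by_contra hnot
    have hsB : s i ∉ B := fun h => hnot (hB h)
    simp [CB, hsB] at hleft
  have himg : B₀.image s ⊆ B₀ := by
    intro j hj
    obtain ⟨i, hi, rfl⟩ := Finset.mem_image.mp hj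
    exact hsub i hi
  refine Finset.eq_of_subset_of_card_le himg ?_
  rw [Finset.card_image_of_injective _ s.injective]
end
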